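/- arXiv:0801.1981 — 15 statements merged into one kernel-verified Lean document; each statement's English description precedes it below -/
import Mathlib

section
/- The map h/k ↦ h/(k-h) is an order-preserving bijection from the left halfsequence F^{≤1/2}(B(2m), m) onto the Farey sequence F_m. -/
/-- The Farey sequence of order `m`: rationals in `[0,1]` with denominator at most `m`. -/
def Farey (m : ℕ) : Set ℚ := {q | 0 ≤ q ∧ q ≤ 1 ∧ q.den ≤ m}

/-- The Farey subsequence `F(B(2m), m)`: fractions `h/k` in lowest terms with
`0 ≤ h/k ≤ 1`, `k ≤ 2m` and `k - m ≤ h ≤ m`. -/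
def FareyB (m : ℕ) : Set ℚ :=
  {q | 0 ≤ q ∧ q ≤ 1 ∧ q.den ≤ 2 * m ∧ (q.den : ℤ) - m ≤ q.num ∧ q.num ≤ m}

/-- The left halfsequence `F^{≤1/2}(B(2m), m)`. -/
def FareyBLeft (m : ℕ) : Set ℚ := {q ∈ FareyB m | q ≤ 1/2}

/-- The right halfsequence `F^{≥1/2}(B(2m), m)`. -/
def FareyBRight (m : ℕ) : Set ℚ := {q ∈ FareyB m | 1/2 ≤ q}

/-!
On `q < 1`, the map `q ↦ q / (1 - q)` is strictly increasing with inverse `p ↦ p / (1 + p)`.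
It acts on reduced fractions by `h/k ↦ h/(k - h)`, and `h/(k - h)` is again reduced because
`gcd(h, k - h) = gcd(h, k) = 1`. Hence the conditions `k - m ≤ h` and `h/k ≤ 1/2` on the left
halfsequence become exactly `k - h ≤ m` and `h/(k - h) ≤ 1`, while `k ≤ 2m` and `h ≤ m` follow
automatically from `h ≤ k - h ≤ m`.
-/

namespace Rat

theorem isCoprime_num_den_sub_num (q : ℚ) : IsCoprime q.num (q.den - q.num) := by
  have h : IsCoprime q.num q.den := Int.isCoprime_iff_gcd_eq_one.mpr q.reduced
  simpa [sub_eq_add_neg] using h.add_mul_left_right (-1)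

theorem div_one_sub_eq (q : ℚ) : q / (1 - q) = q.num / ((q.den : ℤ) - q.num : ℤ) := by
  have hden : (q.den : ℚ) ≠ 0 := by exact_mod_cast q.den_ne_zero
  conv_lhs => rw [← q.num_div_den, ← div_self hden, div_sub_div_same]
  rw [div_div_div_cancel_right₀ hden]
  push_cast
  rfl

theorem num_div_one_sub {q : ℚ} (hq : q < 1) : (q / (1 - q)).num = q.num := by
  rw [div_one_sub_eq]
  exact num_div_eq_of_coprime (by linarith [num_lt_denom_iff.mpr hq])
    (Int.isCoprime_iff_gcd_eq_one.mp q.isCoprime_num_den_sub_num)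

theorem den_div_one_sub {q : ℚ} (hq : q < 1) : ((q / (1 - q)).den : ℤ) = q.den - q.num := by
  rw [div_one_sub_eq]
  exact den_div_eq_of_coprime (by linarith [num_lt_denom_iff.mpr hq])
    (Int.isCoprime_iff_gcd_eq_one.mp q.isCoprime_num_den_sub_num)

end Rat

theorem strictMonoOn_div_one_sub {K : Type*} [Field K] [LinearOrder K] [IsStrictOrderedRing K] :
    StrictMonoOn (fun x : K => x / (1 - x)) (Set.Iio 1) := by
  intro x hx y hy hxy
  have hx' : 0 < 1 - x := sub_pos.mpr hx
  have hy' : 0 < 1 - y := sub_pos.mpr hy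
  simp only
  rw [div_lt_div_iff₀ hx' hy']
  nlinarith

theorem div_one_add_div_one_sub_div_one_add {K : Type*} [Field K] {x : K} (hx : 1 + x ≠ 0) :
    x / (1 + x) / (1 - x / (1 + x)) = x := by
  field_simp
  ring

theorem fareyBLeft_subset_Iio_one (m : ℕ) : FareyBLeft m ⊆ Set.Iio 1 :=
  fun _ hq => lt_of_le_of_lt hq.2 (by norm_num)

theorem mapsTo_fareyBLeft_farey (m : ℕ) :
    Set.MapsTo (fun q : ℚ => q / (1 - q)) (FareyBLeft m) (Farey m) := by
  rintro q ⟨⟨hq0, -, -, hnum, -⟩, hhalf : q ≤ 1 / 2⟩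
  have hq1 : 0 < 1 - q := by linarith
  refine ⟨div_nonneg hq0 hq1.le, (div_le_one hq1).mpr (by linarith), ?_⟩
  have hden := Rat.den_div_one_sub (sub_pos.mp hq1)
  show (q / (1 - q)).den ≤ m
  omega

theorem surjOn_fareyBLeft_farey (m : ℕ) :
    Set.SurjOn (fun q : ℚ => q / (1 - q)) (FareyBLeft m) (Farey m) := by
  rintro p ⟨hp0, hp1, hpden⟩
  have hnum0 : 0 ≤ p.num := Rat.num_nonneg.mpr hp0
  have hnum_le : p.num ≤ p.den := Rat.num_le_denom_iff.mpr hp1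
  set q := p / (1 + p) with hq
  have hqp : q / (1 - q) = p := div_one_add_div_one_sub_div_one_add (by linarith)
  have hq1 : q < 1 := by rw [hq, div_lt_one (by linarith)]; linarith
  have hnum : q.num = p.num := by rw [← hqp, Rat.num_div_one_sub hq1]
  have hden : (q.den : ℤ) = p.den + p.num := by
    rw [← hqp, Rat.num_div_one_sub hq1, Rat.den_div_one_sub hq1, sub_add_cancel]
  have hhalf : q ≤ 1 / 2 := by
    rw [hq, div_le_div_iff₀ (by linarith) two_pos]
    linarith
  refine ⟨q, ⟨⟨div_nonneg hp0 (by linarith), by linarith, ?_, ?_, ?_⟩, hhalf⟩, hqp⟩ <;> omega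

theorem fareyBLeft_to_farey_general (m : ℕ) :
    Set.BijOn (fun q : ℚ => q / (1 - q)) (FareyBLeft m) (Farey m) ∧
      StrictMonoOn (fun q : ℚ => q / (1 - q)) (FareyBLeft m) := by
  have hmono := strictMonoOn_div_one_sub.mono (fareyBLeft_subset_Iio_one m)
  exact ⟨⟨mapsTo_fareyBLeft_farey m, hmono.injOn, surjOn_fareyBLeft_farey m⟩, hmono⟩

/-- The map `h/k ↦ h/(k-h)`, i.e. `q ↦ q/(1-q)`, is an order-preserving bijection
from the left halfsequence `F^{≤1/2}(B(2m), m)` onto `F_m`. -/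
theorem fareyBLeft_to_farey (m : ℕ) (hm : 1 < m) :
    Set.BijOn (fun q : ℚ => q / (1 - q)) (FareyBLeft m) (Farey m) ∧
      StrictMonoOn (fun q : ℚ => q / (1 - q)) (FareyBLeft m) :=
  fareyBLeft_to_farey_general m
end

section
/- The map h/k ↦ h/(k+h) is an order-preserving bijection from the Farey sequence F_m onto the left halfsequence F^{≤1/2}(B(2m), m), and it is inverse to the map h/k ↦ h/(k-h). -/
lemma aux_map1 (q : ℚ) (hq : 0 ≤ q) :
    (q / (1 + q)).num = q.num ∧ ((q / (1 + q)).den : ℤ) = (q.den : ℤ) + q.num := by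
  have hnum : 0 ≤ q.num := Rat.num_nonneg.mpr hq
  have hden : (0:ℤ) < q.den := by exact_mod_cast q.pos
  have hb : (0:ℤ) < (q.den : ℤ) + q.num := by linarith
  have hcop : Nat.Coprime q.num.natAbs ((q.den : ℤ) + q.num).natAbs := by
    have h1 : ((q.den : ℤ) + q.num).natAbs = q.den + q.num.natAbs := by omega
    rw [h1]
    exact Nat.coprime_add_self_right.mpr q.reduced
  have h1q : (1:ℚ) + q ≠ 0 := by positivity
  have hdq : (q.den : ℚ) ≠ 0 := by positivity
  have key : q * q.den = q.num := Rat.mul_den_eq_num q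
  have heq : q / (1 + q) = (q.num : ℚ) / (((q.den : ℤ) + q.num : ℤ) : ℚ) := by
    have hbq : (((q.den : ℤ) + q.num : ℤ) : ℚ) ≠ 0 := by
      exact_mod_cast hb.ne'
    rw [div_eq_div_iff h1q hbq]
    push_cast
    linear_combination key
  rw [heq]
  exact ⟨Rat.num_div_eq_of_coprime hb hcop, Rat.den_div_eq_of_coprime hb hcop⟩

lemma aux_map2 (q : ℚ) (hq : 0 ≤ q) (hq2 : q ≤ 1/2) :
    (q / (1 - q)).num = q.num ∧ ((q / (1 - q)).den : ℤ) = (q.den : ℤ) - q.num := by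
  have hnum : 0 ≤ q.num := Rat.num_nonneg.mpr hq
  have hden : (0:ℤ) < q.den := by exact_mod_cast q.pos
  have h2n : 2 * q.num ≤ q.den := by
    have hd : (0:ℚ) < q.den := by exact_mod_cast q.pos
    have hnd := Rat.num_div_den q
    rw [← hnd, div_le_div_iff₀ hd (by norm_num)] at hq2
    have : (2 * q.num : ℚ) ≤ (q.den : ℚ) := by linarith
    exact_mod_cast this
  have hb : (0:ℤ) < (q.den : ℤ) - q.num := by omega
  have hcop : Nat.Coprime q.num.natAbs ((q.den : ℤ) - q.num).natAbs := by
    have h1 : ((q.den : ℤ) - q.num).natAbs = q.den - q.num.natAbs := by omega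
    have h2 : q.num.natAbs ≤ q.den := by omega
    rw [h1]
    exact (Nat.coprime_sub_self_right h2).mpr q.reduced
  have h1q : (1:ℚ) - q ≠ 0 := by
    have : q < 1 := lt_of_le_of_lt hq2 (by norm_num)
    intro h; apply absurd this; simp; linarith [sub_eq_zero.mp h]
  have key : q * q.den = q.num := Rat.mul_den_eq_num q
  have heq : q / (1 - q) = (q.num : ℚ) / (((q.den : ℤ) - q.num : ℤ) : ℚ) := by
    have hbq : (((q.den : ℤ) - q.num : ℤ) : ℚ) ≠ 0 := by
      exact_mod_cast hb.ne'
    rw [div_eq_div_iff h1q hbq]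
    push_cast
    linear_combination key
  rw [heq]
  exact ⟨Rat.num_div_eq_of_coprime hb hcop, Rat.den_div_eq_of_coprime hb hcop⟩

/-- The map `h/k ↦ h/(k+h)`, i.e. `q ↦ q/(1+q)`, is an order-preserving bijection
from `F_m` onto the left halfsequence `F^{≤1/2}(B(2m), m)`, inverse to `q ↦ q/(1-q)`. -/
theorem farey_to_fareyBLeft (m : ℕ) (hm : 1 < m) :
    Set.BijOn (fun q : ℚ => q / (1 + q)) (Farey m) (FareyBLeft m) ∧
      StrictMonoOn (fun q : ℚ => q / (1 + q)) (Farey m) ∧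
      Set.InvOn (fun q : ℚ => q / (1 - q)) (fun q : ℚ => q / (1 + q))
        (Farey m) (FareyBLeft m) := by
  have hmono : StrictMonoOn (fun q : ℚ => q / (1 + q)) (Farey m) := by
    intro a ha b hb hab
    obtain ⟨ha0, -, -⟩ := ha
    obtain ⟨hb0, -, -⟩ := hb
    have h1a : (0:ℚ) < 1 + a := by linarith
    have h1b : (0:ℚ) < 1 + b := by linarith
    simp only
    rw [div_lt_div_iff₀ h1a h1b]
    nlinarith
  have hmaps : Set.MapsTo (fun q : ℚ => q / (1 + q)) (Farey m) (FareyBLeft m) := by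
    intro q hq
    obtain ⟨h0, h1, hd⟩ := hq
    have h1q : (0:ℚ) < 1 + q := by linarith
    obtain ⟨hn, hdn⟩ := aux_map1 q h0
    have hle : (fun q : ℚ => q / (1 + q)) q ≤ 1/2 := by
      simp only
      rw [div_le_div_iff₀ h1q (by norm_num)]
      linarith
    have hnum0 : 0 ≤ q.num := Rat.num_nonneg.mpr h0
    have hnd : q.num ≤ (q.den : ℤ) := by
      have hd' : (0:ℚ) < q.den := by exact_mod_cast q.pos
      have hnd := Rat.num_div_den q
      rw [← hnd, div_le_one hd'] at h1
      exact_mod_cast h1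
    have hdm : (q.den : ℤ) ≤ m := by exact_mod_cast hd
    refine ⟨⟨by positivity, le_trans hle (by norm_num), ?_, ?_, ?_⟩, hle⟩
    · have : ((q / (1 + q)).den : ℤ) ≤ 2 * m := by rw [hdn]; omega
      exact_mod_cast this
    · rw [hn, hdn]; omega
    · rw [hn]; omega
  have hinv : Set.InvOn (fun q : ℚ => q / (1 - q)) (fun q : ℚ => q / (1 + q))
      (Farey m) (FareyBLeft m) := by
    constructor
    · intro q hq
      have h0 := hq.1
      have h1q : (1:ℚ) + q ≠ 0 := by positivity
      simp only
      have e1 : (1:ℚ) - q / (1 + q) = 1 / (1 + q) := by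
        rw [eq_div_iff h1q, sub_mul, div_mul_cancel₀ _ h1q]; ring
      rw [e1, div_div_div_cancel_right₀ (hc := h1q), div_one]
    · intro q hq
      obtain ⟨⟨h0, -, -⟩, h2⟩ := hq
      have h1q : (1:ℚ) - q ≠ 0 := by
        intro h; have := sub_eq_zero.mp h; rw [← this] at h2; norm_num at h2
      simp only
      have e1 : (1:ℚ) + q / (1 - q) = 1 / (1 - q) := by
        rw [eq_div_iff h1q, add_mul, div_mul_cancel₀ _ h1q]; ring
      rw [e1, div_div_div_cancel_right₀ (hc := h1q), div_one]
  refine ⟨⟨hmaps, hmono.injOn, ?_⟩, hmono, hinv⟩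
  intro q hq
  obtain ⟨⟨h0, h1, hd2m, hdm, hnm⟩, h2⟩ := hq
  have hq1 : q < 1 := lt_of_le_of_lt h2 (by norm_num)
  have h1q : (0:ℚ) < 1 - q := by linarith
  obtain ⟨hn, hdn⟩ := aux_map2 q h0 h2
  have hnum0 : 0 ≤ q.num := Rat.num_nonneg.mpr h0
  refine ⟨q / (1 - q), ⟨?_, ?_, ?_⟩, hinv.2 ⟨⟨h0, h1, hd2m, hdm, hnm⟩, h2⟩⟩
  · positivity
  · rw [div_le_one h1q]; linarith
  · have : ((q / (1 - q)).den : ℤ) ≤ m := by rw [hdn]; omega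
    exact_mod_cast this
end

section
/- The map h/k ↦ (2h-k)/h is an order-preserving bijection from the right halfsequence F^{≥1/2}(B(2m), m) onto the Farey sequence F_m, with inverse h/k ↦ k/(2k-h). -/
/-!
Writing `q = h/k` in lowest terms, `(2q-1)/q = (2h-k)/h` and `1/(2-q) = k/(2k-h)` are again in
lowest terms, since `gcd(2h-k, h) = gcd(k, 2k-h) = gcd(h, k) = 1`. So the map acts on numerators
and denominators by `(h, k) ↦ (2h-k, h)`: it turns `1/2 ≤ h/k ≤ 1`, `h ≤ m` into
`0 ≤ 2h-k ≤ h ≤ m`, and the remaining constraints `k ≤ 2m`, `k - m ≤ h` of `F(B(2m), m)` hold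
automatically for `k/(2k-h)` when `h/k ∈ F_m`. The two maps are mutually inverse Möbius
transformations, and `(2q-1)/q = 2 - 1/q` is increasing for `q > 0`.
-/

namespace Rat

theorem num_den_intCast_div_of_isCoprime {a b : ℤ} (hb : 0 < b) (h : IsCoprime a b) :
    ((a : ℚ) / b).num = a ∧ (((a : ℚ) / b).den : ℤ) = b := by
  have hcop : Nat.Coprime a.natAbs b.natAbs := Int.isCoprime_iff_gcd_eq_one.mp h
  exact ⟨num_div_eq_of_coprime hb hcop, den_div_eq_of_coprime hb hcop⟩

theorem num_den_two_mul_sub_one_div {q : ℚ} (hq : 0 < q) :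
    ((2 * q - 1) / q).num = 2 * q.num - q.den ∧ (((2 * q - 1) / q).den : ℤ) = q.num := by
  have hnum : 0 < q.num := num_pos.mpr hq
  have hcop : IsCoprime (2 * q.num - q.den) q.num := by
    simpa [sub_eq_neg_add, mul_comm] using
      (isCoprime_num_den q).symm.neg_left.add_mul_left_left 2
  have hq' : (2 * q - 1) / q = ((2 * q.num - q.den : ℤ) : ℚ) / (q.num : ℚ) := by
    conv_lhs => rw [← num_div_den q]
    have : (q.num : ℚ) ≠ 0 := by exact_mod_cast hnum.ne'
    push_cast
    field_simp
  rw [hq']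
  exact num_den_intCast_div_of_isCoprime hnum hcop

theorem num_den_one_div_two_sub {p : ℚ} (hp : p < 2) :
    (1 / (2 - p)).num = p.den ∧ ((1 / (2 - p)).den : ℤ) = 2 * p.den - p.num := by
  have hden : 0 < 2 * (p.den : ℤ) - p.num := by
    have : p.num < 2 * p.den := by
      rw [← num_div_den p, div_lt_iff₀ (by exact_mod_cast p.pos)] at hp
      exact_mod_cast hp
    omega
  have hcop : IsCoprime (p.den : ℤ) (2 * p.den - p.num) := by
    simpa [sub_eq_neg_add, mul_comm] using
      (isCoprime_num_den p).symm.neg_right.add_mul_right_right 2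
  have hp' : 1 / (2 - p) = ((p.den : ℤ) : ℚ) / ((2 * p.den - p.num : ℤ) : ℚ) := by
    have hd : (p.den : ℚ) ≠ 0 := by exact_mod_cast p.den_ne_zero
    have h2 : 2 * (p.den : ℚ) - p.num ≠ 0 := by exact_mod_cast hden.ne'
    conv_lhs => rw [← num_div_den p]
    push_cast
    field_simp
  rw [hp']
  exact num_den_intCast_div_of_isCoprime hden hcop

end Rat

theorem one_div_two_sub_two_mul_sub_one_div {q : ℚ} (hq : q ≠ 0) :
    1 / (2 - (2 * q - 1) / q) = q := by
  field_simp
  ring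

theorem two_mul_one_div_two_sub_sub_one_div {p : ℚ} (hp : p ≠ 2) :
    (2 * (1 / (2 - p)) - 1) / (1 / (2 - p)) = p := by
  have : (2 : ℚ) - p ≠ 0 := sub_ne_zero.mpr hp.symm
  field_simp
  ring

theorem strictMonoOn_two_mul_sub_one_div :
    StrictMonoOn (fun q : ℚ => (2 * q - 1) / q) (Set.Ioi 0) := by
  intro a (ha : 0 < a) b (hb : 0 < b) hab
  simp only
  rw [div_lt_div_iff₀ ha hb]
  nlinarith

section FareyB

variable {m : ℕ}

theorem pos_of_mem_fareyBRight {q : ℚ} (hq : q ∈ FareyBRight m) : 0 < q :=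
  lt_of_lt_of_le (by norm_num) hq.2

theorem mapsTo_fareyBRight_farey :
    Set.MapsTo (fun q : ℚ => (2 * q - 1) / q) (FareyBRight m) (Farey m) := by
  intro q hq
  have hq0 := pos_of_mem_fareyBRight hq
  obtain ⟨⟨-, hq1, -, -, hnum⟩, hhalf⟩ := hq
  obtain ⟨-, hden⟩ := Rat.num_den_two_mul_sub_one_div hq0
  refine ⟨div_nonneg (by linarith) hq0.le, (div_le_one hq0).mpr (by linarith), ?_⟩
  change ((2 * q - 1) / q).den ≤ m
  omega

theorem mapsTo_farey_fareyBRight :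
    Set.MapsTo (fun p : ℚ => 1 / (2 - p)) (Farey m) (FareyBRight m) := by
  rintro p ⟨hp0, hp1, hpden⟩
  have h2 : 0 < 2 - p := by linarith
  obtain ⟨hnum, hden⟩ := Rat.num_den_one_div_two_sub (p := p) (by linarith)
  have : 0 ≤ p.num := Rat.num_nonneg.mpr hp0
  refine ⟨⟨by positivity, (div_le_one h2).mpr (by linarith), ?_, ?_, ?_⟩,
    (div_le_div_iff₀ (by norm_num) h2).mpr (by linarith)⟩
  · change (1 / (2 - p)).den ≤ 2 * m
    omega
  · change ((1 / (2 - p)).den : ℤ) - m ≤ (1 / (2 - p)).num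
    omega
  · change (1 / (2 - p)).num ≤ m
    omega

theorem invOn_fareyBRight_farey :
    Set.InvOn (fun p : ℚ => 1 / (2 - p)) (fun q : ℚ => (2 * q - 1) / q)
      (FareyBRight m) (Farey m) :=
  ⟨fun q hq => one_div_two_sub_two_mul_sub_one_div (pos_of_mem_fareyBRight hq).ne',
    fun p hp => two_mul_one_div_two_sub_sub_one_div (by linarith [hp.2.1])⟩

end FareyB

theorem fareyBRight_to_farey_general (m : ℕ) :
    Set.BijOn (fun q : ℚ => (2 * q - 1) / q) (FareyBRight m) (Farey m) ∧
      StrictMonoOn (fun q : ℚ => (2 * q - 1) / q) (FareyBRight m) ∧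
      Set.InvOn (fun q : ℚ => 1 / (2 - q)) (fun q : ℚ => (2 * q - 1) / q)
        (FareyBRight m) (Farey m) :=
  ⟨invOn_fareyBRight_farey.bijOn mapsTo_fareyBRight_farey mapsTo_farey_fareyBRight,
    strictMonoOn_two_mul_sub_one_div.mono fun _ hq => pos_of_mem_fareyBRight hq,
    invOn_fareyBRight_farey⟩

/-- The map `h/k ↦ (2h-k)/h`, i.e. `q ↦ (2q-1)/q`, is an order-preserving bijection
from the right halfsequence `F^{≥1/2}(B(2m), m)` onto `F_m`,
with inverse `h/k ↦ k/(2k-h)`, i.e. `q ↦ 1/(2-q)`. -/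
theorem fareyBRight_to_farey (m : ℕ) (hm : 1 < m) :
    Set.BijOn (fun q : ℚ => (2 * q - 1) / q) (FareyBRight m) (Farey m) ∧
      StrictMonoOn (fun q : ℚ => (2 * q - 1) / q) (FareyBRight m) ∧
      Set.InvOn (fun q : ℚ => 1 / (2 - q)) (fun q : ℚ => (2 * q - 1) / q)
        (FareyBRight m) (Farey m) :=
  fareyBRight_to_farey_general m
end

section
/- The map h/k ↦ (k-2h)/(k-h) is an order-reversing bijection from the left halfsequence F^{≤1/2}(B(2m), m) onto the Farey sequence F_m, with inverse h/k ↦ (k-h)/(2k-h). -/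
section Aux

private lemma coprime_of_bezout {a b : ℤ} (u v : ℤ) (h : u * a + v * b = 1) :
    Nat.Coprime a.natAbs b.natAbs := by
  have : IsCoprime a b := ⟨u, v, by linarith⟩
  rwa [Int.isCoprime_iff_gcd_eq_one] at this

private lemma num_den_f (q : ℚ) (h0 : 0 ≤ q) (h12 : q ≤ 1/2) :
    ((1 - 2 * q) / (1 - q)).num = (q.den : ℤ) - 2 * q.num ∧
      ((((1 - 2 * q) / (1 - q)).den : ℤ)) = (q.den : ℤ) - q.num := by
  set n : ℤ := q.num with hn
  set d : ℤ := (q.den : ℤ) with hd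
  have hdpos : 0 < d := by positivity
  have hq : (n : ℚ) / d = q := q.num_div_den
  have hn0 : 0 ≤ n := Rat.num_nonneg.mpr h0
  have h2nd : 2 * n ≤ d := by
    have : (n : ℚ) / d ≤ 1 / 2 := by rw [hq]; exact h12
    rw [div_le_div_iff₀ (by exact_mod_cast hdpos) (by norm_num)] at this
    have h' : ((2 * n : ℤ) : ℚ) ≤ ((d : ℤ) : ℚ) := by push_cast; linarith
    exact_mod_cast h'
  have hdn : 0 < d - n := by omega
  have hcop : Nat.Coprime n.natAbs d.natAbs := q.reduced
  obtain ⟨u, v, huv⟩ : IsCoprime n d := Int.isCoprime_iff_gcd_eq_one.mpr hcop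
  have hcop2 : Nat.Coprime (d - 2 * n).natAbs (d - n).natAbs :=
    coprime_of_bezout (-(u + v)) (u + 2 * v) (by linarith [huv])
  have hrw : (1 - 2 * q) / (1 - q) = ((d - 2 * n : ℤ) : ℚ) / ((d - n : ℤ) : ℚ) := by
    rw [← hq]
    have hd' : (d : ℚ) ≠ 0 := by exact_mod_cast hdpos.ne'
    have hdn' : ((d - n : ℤ) : ℚ) ≠ 0 := by exact_mod_cast hdn.ne'
    push_cast at hdn' ⊢
    field_simp
  rw [hrw]
  exact ⟨Rat.num_div_eq_of_coprime hdn hcop2, Rat.den_div_eq_of_coprime hdn hcop2⟩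

private lemma num_den_g (q : ℚ) (h0 : 0 ≤ q) (h1 : q ≤ 1) :
    ((1 - q) / (2 - q)).num = (q.den : ℤ) - q.num ∧
      ((((1 - q) / (2 - q)).den : ℤ)) = 2 * (q.den : ℤ) - q.num := by
  set n : ℤ := q.num with hn
  set d : ℤ := (q.den : ℤ) with hd
  have hdpos : 0 < d := by positivity
  have hq : (n : ℚ) / d = q := q.num_div_den
  have hn0 : 0 ≤ n := Rat.num_nonneg.mpr h0
  have hnd : n ≤ d := by
    have : (n : ℚ) / d ≤ 1 := by rw [hq]; exact h1
    rw [div_le_one (by exact_mod_cast hdpos)] at this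
    exact_mod_cast this
  have hdn : 0 < 2 * d - n := by omega
  have hcop : Nat.Coprime n.natAbs d.natAbs := q.reduced
  obtain ⟨u, v, huv⟩ : IsCoprime n d := Int.isCoprime_iff_gcd_eq_one.mpr hcop
  have hcop2 : Nat.Coprime (d - n).natAbs (2 * d - n).natAbs :=
    coprime_of_bezout (-(2 * u + v)) (u + v) (by linarith [huv])
  have hrw : (1 - q) / (2 - q) = ((d - n : ℤ) : ℚ) / ((2 * d - n : ℤ) : ℚ) := by
    rw [← hq]
    have hd' : (d : ℚ) ≠ 0 := by exact_mod_cast hdpos.ne'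
    have hdn' : ((2 * d - n : ℤ) : ℚ) ≠ 0 := by exact_mod_cast hdn.ne'
    push_cast at hdn' ⊢
    field_simp
  rw [hrw]
  exact ⟨Rat.num_div_eq_of_coprime hdn hcop2, Rat.den_div_eq_of_coprime hdn hcop2⟩

end Aux

/-- The map `h/k ↦ (k-2h)/(k-h)`, i.e. `q ↦ (1-2q)/(1-q)`, is an order-reversing
bijection from the left halfsequence `F^{≤1/2}(B(2m), m)` onto `F_m`,
with inverse `h/k ↦ (k-h)/(2k-h)`, i.e. `q ↦ (1-q)/(2-q)`. -/
theorem fareyBLeft_to_farey_reversing (m : ℕ) (hm : 1 < m) :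
    Set.BijOn (fun q : ℚ => (1 - 2 * q) / (1 - q)) (FareyBLeft m) (Farey m) ∧
      StrictAntiOn (fun q : ℚ => (1 - 2 * q) / (1 - q)) (FareyBLeft m) ∧
      Set.InvOn (fun q : ℚ => (1 - q) / (2 - q)) (fun q : ℚ => (1 - 2 * q) / (1 - q))
        (FareyBLeft m) (Farey m) := by
  -- strict antitonicity
  have hanti : StrictAntiOn (fun q : ℚ => (1 - 2 * q) / (1 - q)) (FareyBLeft m) := by
    intro x hx y hy hxy
    obtain ⟨⟨-, -, -, -, -⟩, hx12⟩ := hx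
    obtain ⟨⟨-, -, -, -, -⟩, hy12⟩ := hy
    have hx1 : (0:ℚ) < 1 - x := by linarith
    have hy1 : (0:ℚ) < 1 - y := by linarith
    simp only
    rw [div_lt_div_iff₀ hy1 hx1]
    nlinarith
  -- maps to
  have hmaps : Set.MapsTo (fun q : ℚ => (1 - 2 * q) / (1 - q)) (FareyBLeft m) (Farey m) := by
    intro q hq
    obtain ⟨⟨h0, h1, hden, hlb, hub⟩, h12⟩ := hq
    obtain ⟨hnum, hden'⟩ := num_den_f q h0 h12
    have hq1 : (0:ℚ) < 1 - q := by linarith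
    refine ⟨?_, ?_, ?_⟩
    · apply div_nonneg (by linarith) hq1.le
    · rw [div_le_one hq1]; linarith [Rat.num_nonneg.mpr h0,
        (show (0:ℚ) ≤ q from h0)]
    · have : (((1 - 2 * q) / (1 - q)).den : ℤ) ≤ (m : ℤ) := by
        rw [hden']; omega
      exact_mod_cast this
  -- g maps Farey into FareyBLeft
  have hgmaps : Set.MapsTo (fun q : ℚ => (1 - q) / (2 - q)) (Farey m) (FareyBLeft m) := by
    intro p hp
    obtain ⟨h0, h1, hden⟩ := hp
    obtain ⟨hnum, hden'⟩ := num_den_g p h0 h1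
    have hp2 : (0:ℚ) < 2 - p := by linarith
    have hn0 : 0 ≤ p.num := Rat.num_nonneg.mpr h0
    have hdpos : 0 < (p.den : ℤ) := by exact_mod_cast p.pos
    have hnd : p.num ≤ (p.den : ℤ) := by
      have hq : (p.num : ℚ) / (p.den : ℚ) = p := p.num_div_den
      have : (p.num : ℚ) / (p.den : ℚ) ≤ 1 := by rw [hq]; exact h1
      rw [div_le_one (by exact_mod_cast hdpos)] at this
      exact_mod_cast this
    have hdm : (p.den : ℤ) ≤ (m : ℤ) := by exact_mod_cast hden
    refine ⟨⟨?_, ?_, ?_, ?_, ?_⟩, ?_⟩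
    · exact div_nonneg (by linarith) hp2.le
    · rw [div_le_one hp2]; linarith
    · have : ((((1 - p) / (2 - p)).den : ℤ)) ≤ (2 * m : ℤ) := by rw [hden']; omega
      exact_mod_cast this
    · rw [hnum, hden']; omega
    · rw [hnum]; omega
    · rw [div_le_div_iff₀ hp2 (by norm_num : (0:ℚ) < 2)]; linarith
  -- right inverse algebra: f (g p) = p when p ≤ 1
  have hfg : ∀ p : ℚ, p ≤ 1 → (1 - 2 * ((1 - p) / (2 - p))) / (1 - (1 - p) / (2 - p)) = p := by
    intro p h1
    have hp2 : (2:ℚ) - p ≠ 0 := by intro h; linarith [sub_eq_zero.mp h]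
    have e1 : 1 - 2 * ((1 - p) / (2 - p)) = p / (2 - p) := by field_simp; ring
    have e2 : 1 - (1 - p) / (2 - p) = 1 / (2 - p) := by field_simp; norm_num
    rw [e1, e2]
    field_simp
  -- left inverse algebra: g (f q) = q when q ≤ 1/2
  have hgf : ∀ q : ℚ, q ≤ 1/2 → (1 - (1 - 2 * q) / (1 - q)) / (2 - (1 - 2 * q) / (1 - q)) = q := by
    intro q h12
    have hq1 : (1:ℚ) - q ≠ 0 := by intro h; have := sub_eq_zero.mp h; rw [← this] at h12; norm_num at h12
    have e1 : 1 - (1 - 2 * q) / (1 - q) = q / (1 - q) := by field_simp; ring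
    have e2 : 2 - (1 - 2 * q) / (1 - q) = 1 / (1 - q) := by field_simp; ring
    rw [e1, e2]
    field_simp
  have hsurj : Set.SurjOn (fun q : ℚ => (1 - 2 * q) / (1 - q)) (FareyBLeft m) (Farey m) := by
    intro p hp
    exact ⟨(1 - p) / (2 - p), hgmaps hp, hfg p hp.2.1⟩
  refine ⟨⟨hmaps, hanti.injOn, hsurj⟩, hanti, ?_, ?_⟩
  · intro q hq
    exact hgf q hq.2
  · intro p hp
    exact hfg p hp.2.1
end

section
/- Let h/k be a fraction in the Farey sequence F_m with h/k ≠ 0. If b is the integer satisfying h·b ≡ 1 (mod k) and m - k + 1 ≤ b ≤ m, then the rational ((hb-1)/k)/b is the immediate predecessor of h/k in F_m (it lies in F_m, is less than h/k, and no element of F_m lies strictly between them). -/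
/-- If `h/k ∈ F_m` (in lowest terms, `h ≥ 1`) and `b` satisfies `h·b ≡ 1 (mod k)`
with `m - k + 1 ≤ b ≤ m`, then `((hb-1)/k)/b` is the immediate predecessor of
`h/k` in `F_m`. -/
theorem farey_pred (m h k : ℕ) (b : ℤ) (hm : 1 < m) (hh : 1 ≤ h) (hk : h ≤ k)
    (hcop : Nat.Coprime h k) (hkm : k ≤ m)
    (hb : (k : ℤ) ∣ h * b - 1) (hb1 : (m : ℤ) - k + 1 ≤ b) (hb2 : b ≤ m) :
    (((h : ℚ) * b - 1) / k) / b ∈ Farey m ∧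
      (((h : ℚ) * b - 1) / k) / b < (h : ℚ) / k ∧
      ∀ r ∈ Farey m, r < (h : ℚ) / k → r ≤ (((h : ℚ) * b - 1) / k) / b := by
  obtain ⟨A, hA⟩ := hb
  have hk1 : 1 ≤ k := le_trans hh hk
  have hk0 : (0:ℤ) < k := by exact_mod_cast hk1
  have hh0 : (0:ℤ) < h := by exact_mod_cast hh
  have hkm' : (k:ℤ) ≤ m := by exact_mod_cast hkm
  have hm' : (1:ℤ) < m := by exact_mod_cast hm
  have hb0 : 0 < b := by omega
  have hk' : (h:ℤ) ≤ k := by exact_mod_cast hk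
  have key : (h:ℤ) * b - k * A = 1 := by omega
  have hbQ : (0:ℚ) < b := by exact_mod_cast hb0
  have hkQ : (0:ℚ) < k := by exact_mod_cast hk0
  have hrw : (((h : ℚ) * b - 1) / k) / b = (A:ℚ) / b := by
    have : (h:ℚ) * b - 1 = k * A := by exact_mod_cast hA
    rw [this, mul_comm, mul_div_assoc, div_self hkQ.ne', mul_one]
  have hA0 : 0 ≤ A := by nlinarith
  have hAb : A < b := by nlinarith
  rw [hrw]
  refine ⟨⟨?_, ?_, ?_⟩, ?_, ?_⟩
  · positivity
  · rw [div_le_one hbQ]; exact_mod_cast hAb.le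
  · have hdvd : (((A:ℚ)/b).den : ℤ) ∣ b := by
      rw [show ((A:ℚ)/(b:ℚ)) = Rat.divInt A b from (Rat.divInt_eq_div A b).symm]
      exact Rat.den_dvd A b
    have := Int.le_of_dvd hb0 hdvd
    omega
  · rw [div_lt_div_iff₀ hbQ hkQ]
    have : (A:ℚ) * k = (h:ℚ) * b - 1 := by push_cast; linarith [ (by exact_mod_cast key : (h:ℚ)*b - k*A = 1) ]
    nlinarith
  · intro r hr hrk
    by_contra hcon
    push_neg at hcon
    obtain ⟨hr0, hr1, hrden⟩ := hr
    set n := r.num with hn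
    set q := (r.den : ℤ) with hq
    have hq0 : (0:ℤ) < q := by rw [hq]; exact_mod_cast r.pos
    have hqQ : (0:ℚ) < (q:ℚ) := by exact_mod_cast hq0
    have hrQ : r = (n:ℚ)/(q:ℚ) := by rw [hn, hq]; push_cast; exact (Rat.num_div_den r).symm
    have e1 : n * k < h * q := by
      rw [hrQ, div_lt_div_iff₀ hqQ hkQ] at hrk
      exact_mod_cast hrk
    have e2 : A * q < n * b := by
      rw [hrQ, div_lt_div_iff₀ hbQ hqQ] at hcon
      exact_mod_cast hcon
    have hqm : q ≤ m := by rw [hq]; exact_mod_cast hrden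
    have e1' : (1:ℤ) ≤ h * q - n * k := by omega
    have e2' : (1:ℤ) ≤ n * b - A * q := by omega
    have : q = b * (h * q - n * k) + k * (n * b - A * q) := by linear_combination (-q) * key
    nlinarith [mul_le_mul_of_nonneg_left e1' hb0.le, mul_le_mul_of_nonneg_left e2' hk0.le]
end

section
/- Let h/k be a fraction in the Farey sequence F_m with h/k ≠ 1. If b is the integer satisfying h·b ≡ -1 (mod k) and m - k + 1 ≤ b ≤ m, then the rational ((hb+1)/k)/b is the immediate successor of h/k in F_m. -/
/-- If `h/k ∈ F_m` (in lowest terms, `h/k ≠ 1`) and `b` satisfies `h·b ≡ -1 (mod k)`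
with `m - k + 1 ≤ b ≤ m`, then `((hb+1)/k)/b` is the immediate successor of
`h/k` in `F_m`. -/
theorem farey_succ (m h k : ℕ) (b : ℤ) (hm : 1 < m) (hk : h < k)
    (hcop : Nat.Coprime h k) (hkm : k ≤ m)
    (hb : (k : ℤ) ∣ h * b + 1) (hb1 : (m : ℤ) - k + 1 ≤ b) (hb2 : b ≤ m) :
    (((h : ℚ) * b + 1) / k) / b ∈ Farey m ∧
      (h : ℚ) / k < (((h : ℚ) * b + 1) / k) / b ∧
      ∀ r ∈ Farey m, (h : ℚ) / k < r → (((h : ℚ) * b + 1) / k) / b ≤ r := by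
  obtain ⟨a, ha⟩ := hb
  have hk0 : 0 < k := lt_of_le_of_lt (Nat.zero_le h) hk
  have hk0' : (0:ℤ) < (k:ℤ) := by exact_mod_cast hk0
  have hb0 : (0:ℤ) < b := by omega
  have hkQ : (0:ℚ) < (k:ℚ) := by exact_mod_cast hk0
  have hbQ : (0:ℚ) < (b:ℚ) := by exact_mod_cast hb0
  have hhk : (h:ℤ) < k := by exact_mod_cast hk
  have key : (((h : ℚ) * b + 1) / k) / b = (a : ℚ) / b := by
    have h1 : ((h : ℚ) * b + 1) = (k:ℚ) * a := by exact_mod_cast ha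
    rw [h1]; field_simp
  have ha0 : (0:ℤ) < a := by nlinarith
  have hab : a ≤ b := by nlinarith
  have hcop' : Nat.Coprime a.natAbs b.natAbs := by
    have : IsCoprime a b := ⟨k, -h, by linarith [ha]⟩
    exact Int.isCoprime_iff_gcd_eq_one.mp this
  have hden : (((a:ℚ)/b).den : ℤ) = b := Rat.den_div_eq_of_coprime hb0 hcop'
  rw [key]
  refine ⟨⟨by positivity, ?_, ?_⟩, ?_, ?_⟩
  · rw [div_le_one hbQ]; exact_mod_cast hab
  · have : (((a:ℚ)/b).den : ℤ) ≤ m := by rw [hden]; exact hb2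
    exact_mod_cast this
  · rw [div_lt_div_iff₀ hkQ hbQ]
    have : (h:ℤ) * b < a * k := by linarith [mul_comm a (k:ℤ)]
    exact_mod_cast this
  · rintro r ⟨hr0, hr1, hrden⟩ hr
    by_contra hcon
    push_neg at hcon
    obtain ⟨p, q, hq0', hrq', hqm'⟩ : ∃ (p : ℤ) (q : ℤ), 0 < q ∧ r = (p:ℚ)/(q:ℚ) ∧ q ≤ (m:ℤ) := by
      refine ⟨r.num, (r.den : ℤ), by exact_mod_cast r.pos, ?_, by exact_mod_cast hrden⟩
      push_cast; exact (Rat.num_div_den r).symm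
    have hq0 : (0:ℤ) < q := hq0'
    have hqQ : (0:ℚ) < (q:ℚ) := by exact_mod_cast hq0
    have hrq : r = (p:ℚ)/(q:ℚ) := hrq'
    rw [hrq] at hr hcon
    rw [div_lt_div_iff₀ hkQ hqQ] at hr
    rw [div_lt_div_iff₀ hqQ hbQ] at hcon
    have h1 : (h:ℤ) * q < p * k := by exact_mod_cast hr
    have h2 : p * b < a * q := by exact_mod_cast hcon
    have hqm : q ≤ (m:ℤ) := hqm'
    have key2 : (k:ℤ)*(a*q-b*p) + b*(p*k-h*q) = q := by linear_combination (q:ℤ) * ha.symm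
    linarith [mul_le_mul_of_nonneg_left (by linarith [mul_comm b p] : (1:ℤ) ≤ a*q-b*p) hk0'.le,
      mul_le_mul_of_nonneg_left (by linarith : (1:ℤ) ≤ p*(k:ℤ)-h*q) hb0.le]
end

section
/- Let h/k ∈ F_m with h/k ≠ 0, and let a be the integer with k·a ≡ -1 (mod h) and ⌈hm/k⌉ - h ≤ a ≤ ⌈hm/k⌉ - 1. Then the rational a / ((ka+1)/h) is the immediate predecessor of h/k in F_m. -/
/-- If `h/k ∈ F_m` (in lowest terms, `h ≥ 1`) and `a` satisfies `k·a ≡ -1 (mod h)`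
with `⌈hm/k⌉ - h ≤ a ≤ ⌈hm/k⌉ - 1`, then `a/((ka+1)/h)` is the immediate
predecessor of `h/k` in `F_m`. -/
theorem farey_pred' (m h k : ℕ) (a : ℤ) (hm : 1 < m) (hh : 1 ≤ h) (hk : h ≤ k)
    (hcop : Nat.Coprime h k) (hkm : k ≤ m)
    (ha : (h : ℤ) ∣ k * a + 1)
    (ha1 : ⌈((h : ℚ) * m) / k⌉ - h ≤ a) (ha2 : a ≤ ⌈((h : ℚ) * m) / k⌉ - 1) :
    (a : ℚ) / (((k : ℚ) * a + 1) / h) ∈ Farey m ∧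
      (a : ℚ) / (((k : ℚ) * a + 1) / h) < (h : ℚ) / k ∧
      ∀ r ∈ Farey m, r < (h : ℚ) / k → r ≤ (a : ℚ) / (((k : ℚ) * a + 1) / h) := by
  obtain ⟨b, hb⟩ := ha
  have hk1 : 1 ≤ k := le_trans hh hk
  have hkQ : (0:ℚ) < k := by exact_mod_cast hk1
  have hhQ : (0:ℚ) < h := by exact_mod_cast hh
  set c : ℤ := ⌈((h : ℚ) * m) / k⌉ with hc
  -- bounds on k*c
  have hc1 : (h:ℤ) * m ≤ k * c := by
    have := Int.le_ceil (((h : ℚ) * m) / k)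
    rw [div_le_iff₀ hkQ] at this
    have : (h:ℚ) * m ≤ (k:ℚ) * c := by linarith
    exact_mod_cast this
  have hc2 : (k:ℤ) * c < h * m + k := by
    have h' := mul_lt_mul_of_pos_right (Int.ceil_lt_add_one (((h : ℚ) * m) / k)) hkQ
    rw [add_mul, div_mul_cancel₀ _ (ne_of_gt hkQ), one_mul] at h'
    have : (k:ℚ) * c < h * m + k := by linarith
    exact_mod_cast this
  have hkZ : (0:ℤ) < k := by exact_mod_cast hk1
  have hhZ : (0:ℤ) < h := by exact_mod_cast hh
  -- k*a ≥ h*m - k*h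
  have hka1 : (h:ℤ) * m - k * h ≤ k * a := by nlinarith
  have hka2 : (k:ℤ) * a + 1 ≤ h * m := by nlinarith
  -- b bounds
  have hbmk : ((m:ℤ) - k) < b := by nlinarith [hb]
  have hb1 : (1:ℤ) ≤ b := by
    have : (k:ℤ) ≤ m := by exact_mod_cast hkm
    omega
  have hbm : b ≤ m := by nlinarith [hb]
  have ha0 : 0 ≤ a := by nlinarith [hb]
  have hbQ0 : (0:ℚ) < b := by exact_mod_cast hb1
  -- rewrite the expression
  have hbQ : ((k : ℚ) * a + 1) / h = (b:ℚ) := by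
    have : ((k : ℚ) * a + 1) = h * b := by exact_mod_cast hb
    rw [this]; field_simp
  rw [hbQ]
  have hdet : (h:ℤ) * b - k * a = 1 := by linarith
  have hlt : (a : ℚ) / b < (h:ℚ) / k := by
    rw [div_lt_div_iff₀ hbQ0 hkQ]
    have : (a:ℤ) * k < h * b := by nlinarith
    exact_mod_cast this
  have hhk1 : (h:ℚ) / k ≤ 1 := by
    rw [div_le_one hkQ]; exact_mod_cast hk
  refine ⟨⟨?_, ?_, ?_⟩, hlt, ?_⟩
  · apply div_nonneg
    · exact_mod_cast ha0
    · exact le_of_lt hbQ0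
  · exact le_trans (le_of_lt hlt) hhk1
  · -- denominator bound
    have hdvd : (((a : ℚ) / b).den : ℤ) ∣ b := by
      rw [← Rat.divInt_eq_div]; exact Rat.den_dvd a b
    have := Int.le_of_dvd (by omega) hdvd
    have hmZ : (((a : ℚ) / b).den : ℤ) ≤ (m:ℤ) := le_trans this hbm
    exact_mod_cast hmZ
  · intro r hr hrk
    by_contra hgt
    push_neg at hgt
    obtain ⟨hr0, hr1, hrden⟩ := hr
    set p : ℤ := r.num with hp
    set q : ℕ := r.den with hq
    have hq0 : 0 < q := r.pos
    have hqQ : (0:ℚ) < q := by exact_mod_cast hq0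
    have hrpq : r = (p:ℚ) / q := (Rat.num_div_den r).symm
    -- h*q - k*p ≥ 1
    have h1 : (p:ℤ) * k < h * q := by
      rw [hrpq, div_lt_div_iff₀ hqQ hkQ] at hrk
      exact_mod_cast hrk
    -- p*b - a*q ≥ 1
    have h2 : (a:ℤ) * q < p * b := by
      rw [hrpq, div_lt_div_iff₀ hbQ0 hqQ] at hgt
      exact_mod_cast hgt
    have hqid : (q:ℤ) = b * (h * q - k * p) + k * (p * b - a * q) := by
      linear_combination -(q:ℤ) * hdet
    have hqm : (q:ℤ) ≤ m := by exact_mod_cast hrden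
    have X1 : (1:ℤ) ≤ h * q - k * p := by linarith
    have Y1 : (1:ℤ) ≤ p * b - a * q := by linarith
    have t1 : b * 1 ≤ b * (h * q - k * p) := mul_le_mul_of_nonneg_left X1 (by linarith)
    have t2 : (k:ℤ) * 1 ≤ k * (p * b - a * q) := mul_le_mul_of_nonneg_left Y1 (by linarith)
    have hkm' : (k:ℤ) ≤ m := by exact_mod_cast hkm
    linarith
end

section
/- Let h/k ∈ F_m with h/k ≠ 1, and let a be the integer with k·a ≡ 1 (mod h) and ⌈(hm+2)/k⌉ - h ≤ a ≤ ⌈(hm+2)/k⌉ - 1. Then the rational a / ((ka-1)/h) is the immediate successor of h/k in F_m. -/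
/-- If `h/k ∈ F_m` (in lowest terms, `h/k ≠ 1`, `h ≥ 1`) and `a` satisfies
`k·a ≡ 1 (mod h)` with `⌈(hm+2)/k⌉ - h ≤ a ≤ ⌈(hm+2)/k⌉ - 1`, then `a/((ka-1)/h)`
is the immediate successor of `h/k` in `F_m`. -/
theorem farey_succ' (m h k : ℕ) (a : ℤ) (hm : 1 < m) (hh : 1 ≤ h) (hk : h < k)
    (hcop : Nat.Coprime h k) (hkm : k ≤ m)
    (ha : (h : ℤ) ∣ k * a - 1)
    (ha1 : ⌈((h : ℚ) * m + 2) / k⌉ - h ≤ a) (ha2 : a ≤ ⌈((h : ℚ) * m + 2) / k⌉ - 1) :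
    (a : ℚ) / (((k : ℚ) * a - 1) / h) ∈ Farey m ∧
      (h : ℚ) / k < (a : ℚ) / (((k : ℚ) * a - 1) / h) ∧
      ∀ r ∈ Farey m, (h : ℚ) / k < r → (a : ℚ) / (((k : ℚ) * a - 1) / h) ≤ r := by
  have hh0 : (0:ℤ) < h := by exact_mod_cast hh
  have hk0 : (0:ℤ) < k := by exact_mod_cast (lt_of_le_of_lt (Nat.zero_le h) hk)
  have hkZ : (h:ℤ) < k := by exact_mod_cast hk
  have hkmZ : (k:ℤ) ≤ m := by exact_mod_cast hkm
  have hmZ : (1:ℤ) < m := by exact_mod_cast hm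
  set b : ℤ := ((k:ℤ) * a - 1) / h with hbdef
  have hhb : (h:ℤ) * b = (k:ℤ) * a - 1 := Int.mul_ediv_cancel' ha
  set c : ℤ := ⌈((h : ℚ) * m + 2) / k⌉ with hcdef
  have hkQ0 : (0:ℚ) < (k:ℚ) := by exact_mod_cast hk0
  -- ceiling bounds, cast to ℤ
  have hcuQ : ((h : ℚ) * m + 2) ≤ (c:ℚ) * k := (div_le_iff₀ hkQ0).mp (Int.le_ceil _)
  have hcu : ((h:ℤ) * m + 2 : ℤ) ≤ c * k := by exact_mod_cast hcuQ
  have hclQ : ((c:ℚ) - 1) * k < (h : ℚ) * m + 2 := by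
    have h1 : (c:ℚ) < ((h : ℚ) * m + 2) / k + 1 := Int.ceil_lt_add_one _
    rw [← lt_div_iff₀ hkQ0]
    linarith
  have hcl : (c - 1) * k < (h:ℤ) * m + 2 := by exact_mod_cast hclQ
  -- bounds on b
  have hbu : b ≤ m := by
    have h1 : (k:ℤ) * a ≤ k * (c - 1) := by
      exact mul_le_mul_of_nonneg_left ha2 hk0.le
    have h2 : (h:ℤ) * b ≤ h * m := by nlinarith
    exact le_of_mul_le_mul_left h2 hh0
  have hbl : (m:ℤ) - k + 1 ≤ b := by
    have h1 : (k:ℤ) * (c - h) ≤ k * a := mul_le_mul_of_nonneg_left ha1 hk0.le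
    have h2 : (h:ℤ) * (m - k) < h * b := by nlinarith
    have := lt_of_mul_lt_mul_left h2 hh0.le
    omega
  have hb1 : (1:ℤ) ≤ b := by omega
  have ha0 : (1:ℤ) ≤ a := by nlinarith
  have hab : a ≤ b := by nlinarith
  -- rewrite the expression
  have hbQ : (((k : ℚ) * a - 1) / h) = (b:ℚ) := by
    rw [div_eq_iff (by positivity : (h:ℚ) ≠ 0)]
    have h3 : ((k:ℤ) * a - 1 : ℤ) = b * h := by linarith [hhb]
    exact_mod_cast h3
  rw [hbQ]
  have hbQ0 : (0:ℚ) < (b:ℚ) := by exact_mod_cast hb1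
  have hcoab : IsCoprime a b := ⟨(k:ℤ), -(h:ℤ), by linarith [hhb]⟩
  have hden : (((a:ℚ) / (b:ℚ)).den : ℤ) = b := by
    refine Rat.den_div_eq_of_coprime (by exact_mod_cast hb1) ?_
    exact Int.isCoprime_iff_gcd_eq_one.mp hcoab
  refine ⟨⟨by positivity, ?_, ?_⟩, ?_, ?_⟩
  · rw [div_le_one hbQ0]; exact_mod_cast hab
  · have : (((a:ℚ) / (b:ℚ)).den : ℤ) ≤ m := by rw [hden]; exact hbu
    exact_mod_cast this
  · rw [div_lt_div_iff₀ hkQ0 hbQ0]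
    have : (h:ℤ) * b < a * k := by linarith [hhb]
    exact_mod_cast this
  · intro r hr hlt
    obtain ⟨hr0, hr1, hrden⟩ := hr
    by_contra hcon
    push_neg at hcon
    have hrd0 : (0:ℤ) < (r.den : ℤ) := by exact_mod_cast r.pos
    have hrdQ0 : (0:ℚ) < ((r.den:ℤ) : ℚ) := by exact_mod_cast hrd0
    have hrnum : r = ((r.num : ℚ)) / ((r.den : ℤ) : ℚ) := by
      push_cast
      exact (Rat.num_div_den r).symm
    -- from h/k < r : h * rd < rn * k
    have h1 : (h:ℤ) * r.den + 1 ≤ r.num * k := by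
      rw [hrnum, div_lt_div_iff₀ hkQ0 hrdQ0] at hlt
      have : (h:ℤ) * r.den < r.num * k := by exact_mod_cast hlt
      omega
    -- from r < a/b : rn * b < a * rd
    have h2 : r.num * b + 1 ≤ a * r.den := by
      rw [hrnum, div_lt_div_iff₀ hrdQ0 hbQ0] at hcon
      have : r.num * b < a * (r.den:ℤ) := by exact_mod_cast hcon
      omega
    have hrdm : (r.den : ℤ) ≤ m := by exact_mod_cast hrden
    -- rd = k*(a*rd - rn*b) + b*(rn*k - h*rd) ≥ k + b ≥ m + 1
    have key : (r.den : ℤ) = k * (a * r.den - r.num * b) + b * (r.num * k - h * r.den) := by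
      have hone : (k:ℤ) * a - h * b = 1 := by linarith [hhb]
      linear_combination -(r.den : ℤ) * hone
    have hone : (k:ℤ) * a - h * b = 1 := by linarith [hhb]
    have p1 : (k:ℤ) * 1 ≤ k * (a * r.den - r.num * b) :=
      mul_le_mul_of_nonneg_left (by linarith) hk0.le
    have p2 : b * 1 ≤ b * (r.num * k - h * r.den) :=
      mul_le_mul_of_nonneg_left (by linarith) (by linarith : (0:ℤ) ≤ b)
    linarith
end

section
/- For a fraction 1/j in the Farey sequence F_m (with 1 ≤ j ≤ m), the fraction (⌈m/j⌉ - 1) / (j·(⌈m/j⌉ - 1) + 1) is the immediate predecessor of 1/j in F_m. -/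
/-!
Write `K = ⌈m/j⌉ - 1`; it is the largest integer with `j * K < m`. Since `j * K + 1 ≤ m`, the
fraction `K / (j * K + 1)` lies in `F_m`, and it is just below `1/j`. Conversely, if `a / b < 1/j`
with `b ≤ m` then `j * a + 1 ≤ b`, so `j * a < m` forces `a ≤ K`, and monotonicity of
`x ↦ x / (j * x + 1)` gives `a / b ≤ a / (j * a + 1) ≤ K / (j * K + 1)`.
-/

theorem le_ceil_div_sub_one_iff {m j : ℕ} (hj : 0 < j) (p : ℤ) :
    p ≤ ⌈(m : ℚ) / j⌉ - 1 ↔ (j : ℤ) * p < m := by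
  rw [Int.le_sub_one_iff, Int.lt_ceil, lt_div_iff₀ (by exact_mod_cast hj), mul_comm]
  exact_mod_cast Iff.rfl

theorem div_mul_add_one_le_div_mul_add_one (j : ℕ) {a b : ℚ} (ha : 0 ≤ a) (hab : a ≤ b) :
    a / (j * a + 1) ≤ b / (j * b + 1) := by
  have hb : 0 ≤ b := ha.trans hab
  rw [div_le_div_iff₀ (by positivity) (by positivity)]
  linarith

theorem div_mul_add_one_lt_one_div {j : ℕ} (hj : 0 < j) {K : ℚ} (hK : 0 ≤ K) :
    K / (j * K + 1) < 1 / j := by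
  have hjq : (0 : ℚ) < j := by exact_mod_cast hj
  rw [div_lt_div_iff₀ (by positivity) hjq]
  linarith

theorem div_mul_add_one_mem_farey {m j : ℕ} (hj : 0 < j) {K : ℤ} (hK : 0 ≤ K)
    (hKm : (j : ℤ) * K < m) : (K : ℚ) / ((j : ℚ) * K + 1) ∈ Farey m := by
  have hKq : (0 : ℚ) ≤ K := by exact_mod_cast hK
  refine ⟨by positivity, (div_mul_add_one_lt_one_div hj hKq).le.trans ?_, ?_⟩
  · exact div_le_one_of_le₀ (by exact_mod_cast hj) (by positivity)
  · have hdvd : (((K : ℚ) / ((j : ℚ) * K + 1)).den : ℤ) ∣ j * K + 1 := by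
      rw [show (j : ℚ) * K + 1 = ((j * K + 1 : ℤ) : ℚ) by push_cast; ring, ← Rat.divInt_eq_div]
      exact Rat.den_dvd _ _
    have hden_le := Int.le_of_dvd (by positivity) hdvd
    omega

theorem Rat.mul_num_lt_den_of_lt_one_div {j : ℕ} (hj : 0 < j) {r : ℚ} (h : r < 1 / j) :
    (j : ℤ) * r.num < r.den := by
  rw [← Rat.num_div_den r, div_lt_div_iff₀ (by exact_mod_cast r.pos) (by exact_mod_cast hj),
    one_mul, mul_comm] at h
  exact_mod_cast h

theorem Rat.le_num_div_mul_num_add_one {j : ℕ} {r : ℚ} (hr : 0 ≤ r)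
    (h : (j : ℤ) * r.num < r.den) : r ≤ r.num / ((j : ℚ) * r.num + 1) := by
  have hnum : (0 : ℚ) ≤ r.num := by exact_mod_cast Rat.num_nonneg.mpr hr
  have hden : (j : ℚ) * r.num + 1 ≤ r.den := by exact_mod_cast h
  conv_lhs => rw [← Rat.num_div_den r]
  exact div_le_div_of_nonneg_left hnum (by positivity) hden

theorem le_div_mul_add_one_of_mem_farey {m j : ℕ} (hj : 0 < j) {K : ℤ}
    (hK : ∀ p : ℤ, (j : ℤ) * p < m → p ≤ K) {r : ℚ} (hr : r ∈ Farey m) (hlt : r < 1 / j) :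
    r ≤ (K : ℚ) / ((j : ℚ) * K + 1) := by
  obtain ⟨hr0, -, hrm⟩ := hr
  have hjr := Rat.mul_num_lt_den_of_lt_one_div hj hlt
  have hnumK : r.num ≤ K := hK _ (by omega)
  calc r ≤ r.num / ((j : ℚ) * r.num + 1) := Rat.le_num_div_mul_num_add_one hr0 hjr
    _ ≤ (K : ℚ) / ((j : ℚ) * K + 1) :=
      div_mul_add_one_le_div_mul_add_one j (by exact_mod_cast Rat.num_nonneg.mpr hr0)
        (by exact_mod_cast hnumK)

theorem farey_pred_one_div_general (m j : ℕ) (hm : 1 < m) (hj : 1 ≤ j) :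
    ((⌈(m : ℚ) / j⌉ - 1 : ℤ) : ℚ) / ((j : ℚ) * ((⌈(m : ℚ) / j⌉ - 1 : ℤ) : ℚ) + 1) ∈ Farey m ∧
      ((⌈(m : ℚ) / j⌉ - 1 : ℤ) : ℚ) / ((j : ℚ) * ((⌈(m : ℚ) / j⌉ - 1 : ℤ) : ℚ) + 1) < 1 / j ∧
      ∀ r ∈ Farey m, r < 1 / (j : ℚ) →
        r ≤ ((⌈(m : ℚ) / j⌉ - 1 : ℤ) : ℚ) / ((j : ℚ) * ((⌈(m : ℚ) / j⌉ - 1 : ℤ) : ℚ) + 1) := by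
  have hK := le_ceil_div_sub_one_iff (m := m) hj
  have hK0 : 0 ≤ ⌈(m : ℚ) / j⌉ - 1 := (hK 0).2 (by omega)
  exact ⟨div_mul_add_one_mem_farey hj hK0 ((hK _).1 le_rfl),
    div_mul_add_one_lt_one_div hj (by exact_mod_cast hK0),
    fun r hr hlt => le_div_mul_add_one_of_mem_farey hj (fun p => (hK p).2) hr hlt⟩

/-- For `1/j ∈ F_m`, the fraction `(⌈m/j⌉-1)/(j(⌈m/j⌉-1)+1)` is the immediate
predecessor of `1/j` in `F_m`. -/
theorem farey_pred_one_div (m j : ℕ) (hm : 1 < m) (hj : 1 ≤ j) (hjm : j ≤ m) :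
    ((⌈(m : ℚ) / j⌉ - 1 : ℤ) : ℚ) / ((j : ℚ) * ((⌈(m : ℚ) / j⌉ - 1 : ℤ) : ℚ) + 1) ∈ Farey m ∧
      ((⌈(m : ℚ) / j⌉ - 1 : ℤ) : ℚ) / ((j : ℚ) * ((⌈(m : ℚ) / j⌉ - 1 : ℤ) : ℚ) + 1) < 1 / j ∧
      ∀ r ∈ Farey m, r < 1 / (j : ℚ) →
        r ≤ ((⌈(m : ℚ) / j⌉ - 1 : ℤ) : ℚ) / ((j : ℚ) * ((⌈(m : ℚ) / j⌉ - 1 : ℤ) : ℚ) + 1) :=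
  farey_pred_one_div_general m j hm hj
end

section
/- For a fraction 1/j in the Farey sequence F_m with j > 1, the fraction (⌈(m+2)/j⌉ - 1) / (j·(⌈(m+2)/j⌉ - 1) - 1) is the immediate successor of 1/j in F_m. -/
/-- For `1/j ∈ F_m` with `j > 1`, the fraction `(⌈(m+2)/j⌉-1)/(j(⌈(m+2)/j⌉-1)-1)`
is the immediate successor of `1/j` in `F_m`. -/
theorem farey_succ_one_div (m j : ℕ) (hm : 1 < m) (hj : 1 < j) (hjm : j ≤ m) :
    ((⌈((m : ℚ) + 2) / j⌉ - 1 : ℤ) : ℚ) / ((j : ℚ) * ((⌈((m : ℚ) + 2) / j⌉ - 1 : ℤ) : ℚ) - 1) ∈ Farey m ∧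
      1 / (j : ℚ) < ((⌈((m : ℚ) + 2) / j⌉ - 1 : ℤ) : ℚ) / ((j : ℚ) * ((⌈((m : ℚ) + 2) / j⌉ - 1 : ℤ) : ℚ) - 1) ∧
      ∀ r ∈ Farey m, 1 / (j : ℚ) < r →
        ((⌈((m : ℚ) + 2) / j⌉ - 1 : ℤ) : ℚ) / ((j : ℚ) * ((⌈((m : ℚ) + 2) / j⌉ - 1 : ℤ) : ℚ) - 1) ≤ r := by
  have hj2 : (2:ℤ) ≤ j := by exact_mod_cast hj
  have hjm' : (j:ℤ) ≤ m := by exact_mod_cast hjm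
  have hj0 : (0:ℚ) < j := by positivity
  have hceil_ge : ((m:ℚ)+2)/j ≤ (⌈((m : ℚ) + 2) / j⌉ : ℚ) := Int.le_ceil _
  have hceil_lt : (⌈((m : ℚ) + 2) / j⌉ : ℚ) < ((m:ℚ)+2)/j + 1 := Int.ceil_lt_add_one _
  have hge : (m:ℚ) + 2 ≤ (⌈((m : ℚ) + 2) / j⌉ : ℚ) * j := (div_le_iff₀ hj0).mp hceil_ge
  have hltq : (⌈((m : ℚ) + 2) / j⌉ : ℚ) * j < (m:ℚ) + 2 + j := by
    have h := mul_lt_mul_of_pos_right hceil_lt hj0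
    rwa [add_mul, div_mul_cancel₀ _ hj0.ne', one_mul] at h
  obtain ⟨K, hKdef⟩ : ∃ K : ℤ, (⌈((m : ℚ) + 2) / j⌉ - 1 : ℤ) = K := ⟨_, rfl⟩
  rw [hKdef]
  have hKQ : ((K:ℤ):ℚ) = (⌈((m : ℚ) + 2) / j⌉ : ℚ) - 1 := by rw [← hKdef]; push_cast; ring
  have h1 : (m:ℤ) + 2 - j ≤ j * K := by
    have : (m:ℚ) + 2 - j ≤ (j:ℚ) * ((K:ℤ):ℚ) := by rw [hKQ]; nlinarith
    exact_mod_cast this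
  have h2 : (j:ℤ) * K ≤ m + 1 := by
    have : (j:ℚ) * ((K:ℤ):ℚ) < (m:ℚ) + 2 := by rw [hKQ]; nlinarith
    have h' : (j:ℤ) * K < (m:ℤ) + 2 := by exact_mod_cast this
    omega
  have hK1 : 1 ≤ K := by nlinarith
  obtain ⟨b, hbdef⟩ : ∃ b : ℤ, b = j * K - 1 := ⟨_, rfl⟩
  have hb1 : 1 ≤ b := by rw [hbdef]; nlinarith
  have hbm : b ≤ m := by omega
  have hbmj : (m:ℤ) + 1 - j ≤ b := by omega
  have hbq : ((j : ℚ) * ((K : ℤ) : ℚ) - 1) = ((b : ℤ) : ℚ) := by rw [hbdef]; push_cast; ring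
  have hb0 : (0:ℚ) < (b:ℚ) := by exact_mod_cast hb1.trans_lt' (by norm_num)
  have hK0 : (0:ℚ) ≤ (K:ℚ) := by exact_mod_cast (hK1.trans_lt' (by norm_num)).le
  rw [hbq]
  refine ⟨⟨div_nonneg hK0 hb0.le, ?_, ?_⟩, ?_, ?_⟩
  · rw [div_le_one hb0]
    have : K ≤ b := by rw [hbdef]; nlinarith
    exact_mod_cast this
  · -- denominator bound
    have hdvd : (((Rat.divInt K b)).den : ℤ) ∣ b := Rat.den_dvd K b
    rw [show ((K:ℚ)/(b:ℚ)) = Rat.divInt K b from (Rat.divInt_eq_div K b).symm]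
    have hle : (((Rat.divInt K b)).den : ℤ) ≤ b :=
      Int.le_of_dvd (by exact_mod_cast hb1.trans_lt' (by norm_num)) hdvd
    have : (((Rat.divInt K b)).den : ℤ) ≤ (m:ℤ) := hle.trans hbm
    exact_mod_cast this
  · rw [div_lt_div_iff₀ hj0 hb0]
    have : b < K * j := by rw [hbdef]; nlinarith
    have : (b:ℚ) < (K:ℚ) * j := by exact_mod_cast this
    linarith
  · rintro r ⟨hr0, hr1, hrden⟩ hlt
    obtain ⟨p, hp⟩ : ∃ p : ℤ, r.num = p := ⟨_, rfl⟩
    obtain ⟨q, hq⟩ : ∃ q : ℤ, (r.den : ℤ) = q := ⟨_, rfl⟩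
    have hq0 : (0:ℚ) < (q:ℚ) := by rw [← hq]; exact_mod_cast r.pos
    have hrpq : r = (p:ℚ)/(q:ℚ) := by rw [← hp, ← hq]; push_cast; exact (Rat.num_div_den r).symm
    have hqm : q ≤ (m:ℤ) := by rw [← hq]; exact_mod_cast hrden
    have hjp : q + 1 ≤ p * j := by
      rw [hrpq, div_lt_div_iff₀ hj0 hq0] at hlt
      have h' : q < p * j := by exact_mod_cast (by linarith : (q:ℚ) < (p:ℚ) * j)
      omega
    rw [hrpq, div_le_div_iff₀ hb0 hq0]
    by_contra hcon
    push_neg at hcon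
    have hcon' : p * b < K * q := by exact_mod_cast hcon
    have hcon2 : p * b + 1 ≤ K * q := hcon'
    have key : b + j ≤ q := by nlinarith [hbdef, hb1, hjp, hcon2]
    omega
end

section
/- For a fraction (j-1)/j in the Farey sequence F_m with j > 1, the fraction ((j-1)(⌈(m+2)/j⌉ - 1) - 1) / (j·(⌈(m+2)/j⌉ - 1) - 1) is the immediate predecessor of (j-1)/j in F_m, and ((j-1)(⌈m/j⌉ - 1) + 1) / (j·(⌈m/j⌉ - 1) + 1) is its immediate successor in F_m. -/
lemma farey_key (a b pn q : ℤ) (hb : 0 < b) (hq : 0 < q) (hdet : a*q - b*pn = 1)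
    (r : ℚ) (h1 : (pn:ℚ)/q < r) (h2 : r < (a:ℚ)/b) : b + q ≤ (r.den : ℤ) := by
  have hd : (0:ℤ) < (r.den : ℤ) := by exact_mod_cast r.pos
  have hbq : (0:ℚ) < q := by exact_mod_cast hq
  have hbb : (0:ℚ) < b := by exact_mod_cast hb
  have hdd : (0:ℚ) < (r.den : ℚ) := by exact_mod_cast r.pos
  have e1 : pn * (r.den:ℤ) < r.num * q := by
    have h1' : (pn:ℚ)/q < (r.num:ℚ)/(r.den:ℚ) := by rwa [Rat.num_div_den]
    have := (div_lt_div_iff₀ hbq hdd).mp h1'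
    exact_mod_cast this
  have e2 : b * r.num < a * (r.den:ℤ) := by
    have h2' : (r.num:ℚ)/(r.den:ℚ) < (a:ℚ)/b := by rwa [Rat.num_div_den]
    have h2'' := (div_lt_div_iff₀ hdd hbb).mp h2'
    have h2''' : r.num * b < a * (r.den:ℤ) := by exact_mod_cast h2''
    linarith [h2''']
  have h3 : b * (r.num*q - pn*(r.den:ℤ)) + q*(a*(r.den:ℤ) - b*r.num) = (r.den:ℤ) := by
    linear_combination ((r.den:ℤ)) * hdet
  have h4 : b * 1 ≤ b * (r.num*q - pn*(r.den:ℤ)) :=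
    mul_le_mul_of_nonneg_left (by omega) hb.le
  have h5 : q * 1 ≤ q * (a*(r.den:ℤ) - b*r.num) :=
    mul_le_mul_of_nonneg_left (by omega) hq.le
  linarith

lemma farey_ceil (n j k : ℕ) (hj : 0 < j) (h1 : j*k < n) (h2 : n ≤ j*(k+1)) :
    ⌈(n:ℚ)/j⌉ = (k:ℤ) + 1 := by
  have hjq : (0:ℚ) < j := by exact_mod_cast hj
  rw [Int.ceil_eq_iff]
  constructor
  · rw [lt_div_iff₀ hjq]
    push_cast
    have : (j:ℚ)*k < n := by exact_mod_cast h1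
    nlinarith
  · rw [div_le_iff₀ hjq]
    push_cast
    have : (n:ℚ) ≤ j*(k+1) := by exact_mod_cast h2
    nlinarith

set_option maxHeartbeats 1000000
/-- For `(j-1)/j ∈ F_m` with `j > 1`:
`((j-1)(⌈(m+2)/j⌉-1)-1)/(j(⌈(m+2)/j⌉-1)-1)` is its immediate predecessor in `F_m`,
and `((j-1)(⌈m/j⌉-1)+1)/(j(⌈m/j⌉-1)+1)` is its immediate successor in `F_m`. -/
theorem farey_nbrs_pred_succ (m j : ℕ) (hm : 1 < m) (hj : 1 < j) (hjm : j ≤ m) :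
    (let c2 : ℚ := ((⌈((m : ℚ) + 2) / j⌉ : ℤ) : ℚ) - 1
     let p : ℚ := (((j : ℚ) - 1) * c2 - 1) / ((j : ℚ) * c2 - 1)
     p ∈ Farey m ∧ p < ((j : ℚ) - 1) / j ∧
       ∀ r ∈ Farey m, r < ((j : ℚ) - 1) / j → r ≤ p) ∧
    (let c1 : ℚ := ((⌈(m : ℚ) / j⌉ : ℤ) : ℚ) - 1
     let s : ℚ := (((j : ℚ) - 1) * c1 + 1) / ((j : ℚ) * c1 + 1)
     s ∈ Farey m ∧ ((j : ℚ) - 1) / j < s ∧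
       ∀ r ∈ Farey m, ((j : ℚ) - 1) / j < r → s ≤ r) := by
  have hj0 : 0 < j := by omega
  have hdm1 := Nat.div_add_mod (m+1) j
  have hmm1 := Nat.mod_lt (m+1) hj0
  have hdm2 := Nat.div_add_mod (m-1) j
  have hmm2 := Nat.mod_lt (m-1) hj0
  set k : ℕ := (m+1)/j with hk
  set k1 : ℕ := (m-1)/j with hk1
  have hexp1 : j*(k+1) = j*k + j := by ring
  have hexp2 : j*(k1+1) = j*k1 + j := by ring
  have hkb : j*k ≤ m+1 ∧ m+1 < j*(k+1) := by omega
  have hk1b : j*k1 ≤ m-1 ∧ m-1 < j*(k1+1) := by omega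
  have hc2 : ⌈((m : ℚ) + 2) / j⌉ = (k:ℤ) + 1 := by
    have h : ((m:ℚ)+2) = ((m+2 : ℕ) : ℚ) := by push_cast; ring
    rw [h]
    exact farey_ceil (m+2) j k hj0 (by omega) (by omega)
  have hc1 : ⌈(m : ℚ) / j⌉ = (k1:ℤ) + 1 :=
    farey_ceil m j k1 hj0 (by omega) (by omega)
  have hk_ge : 1 ≤ k := by
    rw [hk]; exact (Nat.one_le_div_iff hj0).mpr (by omega)
  have hjZ : (2:ℤ) ≤ (j:ℤ) := by exact_mod_cast hj
  have hkZ : (1:ℤ) ≤ (k:ℤ) := by exact_mod_cast hk_ge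
  have hk1Z : (0:ℤ) ≤ (k1:ℤ) := by positivity
  have hjQ : (0:ℚ) < j := by exact_mod_cast hj0
  -- integer inequalities transferred
  have hB1 : (m:ℤ)+1 < (j:ℤ)*k + j := by
    have h := hkb.2; rw [hexp1] at h; exact_mod_cast h
  have hB1' : (j:ℤ)*k ≤ (m:ℤ)+1 := by exact_mod_cast hkb.1
  have hB2 : (m:ℤ)-1 < (j:ℤ)*k1 + j := by
    have h := hk1b.2; rw [hexp2] at h
    have h' : ((m-1 : ℕ):ℤ) < (j:ℤ)*k1 + j := by exact_mod_cast h
    have hcast : ((m-1 : ℕ):ℤ) = (m:ℤ) - 1 := by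
      have : (1:ℕ) ≤ m := by omega
      push_cast [this]; ring
    omega
  have hB2' : (j:ℤ)*k1 ≤ (m:ℤ)-1 := by
    have h := hk1b.1
    have h' : ((j:ℤ))*k1 ≤ ((m-1 : ℕ):ℤ) := by exact_mod_cast h
    have hcast : ((m-1 : ℕ):ℤ) = (m:ℤ) - 1 := by
      have : (1:ℕ) ≤ m := by omega
      push_cast [this]; ring
    omega
  constructor
  · intro c2 p
    set pn : ℤ := ((j:ℤ)-1)*k - 1 with hpn
    set qd : ℤ := (j:ℤ)*k - 1 with hqd
    have hq1 : (1:ℤ) ≤ qd := by rw [hqd]; nlinarith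
    have hqm : qd ≤ (m:ℤ) := by omega
    have hp : p = (pn:ℚ)/(qd:ℚ) := by
      show (((j : ℚ) - 1) * (((⌈((m : ℚ) + 2) / j⌉ : ℤ) : ℚ) - 1) - 1) /
          ((j : ℚ) * (((⌈((m : ℚ) + 2) / j⌉ : ℤ) : ℚ) - 1) - 1) = (pn:ℚ)/(qd:ℚ)
      rw [hc2, hpn, hqd]
      push_cast
      ring_nf
    have hqd0 : (0:ℤ) < qd := by omega
    have hqdQ : (0:ℚ) < (qd:ℚ) := by exact_mod_cast hqd0
    have hpn0 : (0:ℤ) ≤ pn := by rw [hpn]; nlinarith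
    have hpnq : pn + (k:ℤ) = qd := by rw [hpn, hqd]; ring
    have hdet : ((j:ℤ)-1) * qd - (j:ℤ) * pn = 1 := by rw [hpn, hqd]; ring
    have hplt : p < ((j : ℚ) - 1) / j := by
      rw [hp, div_lt_div_iff₀ hqdQ hjQ]
      have h : (pn:ℤ) * j < ((j:ℤ)-1) * qd := by linarith [hdet]
      calc (pn:ℚ) * j = (((pn * j : ℤ)):ℚ) := by push_cast; ring
        _ < ((((j:ℤ)-1) * qd : ℤ):ℚ) := by exact_mod_cast h
        _ = ((j:ℚ)-1) * qd := by push_cast; ring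
    refine ⟨⟨?_, ?_, ?_⟩, hplt, ?_⟩
    · rw [hp]
      have : (0:ℚ) ≤ (pn:ℚ) := by exact_mod_cast hpn0
      positivity
    · rw [hp, div_le_one hqdQ]
      have h : pn ≤ qd := by omega
      exact_mod_cast h
    · show (p).den ≤ m
      rw [hp, ← Rat.divInt_eq_div pn qd]
      have hdvd := Rat.den_dvd pn qd
      have h1 : ((Rat.divInt pn qd).den : ℤ) ≤ qd := Int.le_of_dvd hqd0 hdvd
      have h2 : ((Rat.divInt pn qd).den : ℤ) ≤ (m:ℤ) := le_trans h1 hqm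
      exact_mod_cast h2
    · rintro r ⟨hr0, hr1, hrden⟩ hrlt
      by_contra hcon
      push_neg at hcon
      rw [hp] at hcon
      have hkey := farey_key ((j:ℤ)-1) (j:ℤ) pn qd (by omega) hqd0 hdet r hcon
        (by push_cast; exact hrlt)
      have hrd : ((r.den:ℤ)) ≤ (m:ℤ) := by exact_mod_cast hrden
      omega
  · intro c1 s
    set sn : ℤ := ((j:ℤ)-1)*k1 + 1 with hsn
    set td : ℤ := (j:ℤ)*k1 + 1 with htd
    have htd0 : (0:ℤ) < td := by
      have h0 : (0:ℤ) ≤ (j:ℤ)*k1 := by positivity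
      omega
    have htdQ : (0:ℚ) < (td:ℚ) := by exact_mod_cast htd0
    have htm : td ≤ (m:ℤ) := by omega
    have hs : s = (sn:ℚ)/(td:ℚ) := by
      show (((j : ℚ) - 1) * (((⌈(m : ℚ) / j⌉ : ℤ) : ℚ) - 1) + 1) /
          ((j : ℚ) * (((⌈(m : ℚ) / j⌉ : ℤ) : ℚ) - 1) + 1) = (sn:ℚ)/(td:ℚ)
      rw [hc1, hsn, htd]
      push_cast
      ring_nf
    have hsn0 : (0:ℤ) < sn := by
      have h0 : (0:ℤ) ≤ ((j:ℤ)-1)*k1 := by nlinarith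
      omega
    have hsnt : sn + (k1:ℤ) = td := by rw [hsn, htd]; ring
    have hdet : sn * (j:ℤ) - td * ((j:ℤ)-1) = 1 := by rw [hsn, htd]; ring
    have hslt : ((j : ℚ) - 1) / j < s := by
      rw [hs, div_lt_div_iff₀ hjQ htdQ]
      have h : ((j:ℤ)-1) * td < sn * j := by linarith [hdet]
      calc ((j:ℚ)-1) * td = ((((j:ℤ)-1) * td : ℤ):ℚ) := by push_cast; ring
        _ < (((sn * j : ℤ)):ℚ) := by exact_mod_cast h
        _ = (sn:ℚ) * j := by push_cast; ring
    refine ⟨⟨?_, ?_, ?_⟩, hslt, ?_⟩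
    · rw [hs]
      have : (0:ℚ) ≤ (sn:ℚ) := by exact_mod_cast hsn0.le
      positivity
    · rw [hs, div_le_one htdQ]
      have h : sn ≤ td := by omega
      exact_mod_cast h
    · show (s).den ≤ m
      rw [hs, ← Rat.divInt_eq_div sn td]
      have hdvd := Rat.den_dvd sn td
      have h1 : ((Rat.divInt sn td).den : ℤ) ≤ td := Int.le_of_dvd htd0 hdvd
      have h2 : ((Rat.divInt sn td).den : ℤ) ≤ (m:ℤ) := le_trans h1 htm
      exact_mod_cast h2
    · rintro r ⟨hr0, hr1, hrden⟩ hrlt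
      by_contra hcon
      push_neg at hcon
      rw [hs] at hcon
      have hkey := farey_key sn td ((j:ℤ)-1) (j:ℤ) htd0 (by omega) hdet r
        (by push_cast; exact hrlt) hcon
      have hrd : ((r.den:ℤ)) ≤ (m:ℤ) := by exact_mod_cast hrden
      omega
end

section
/- If 2/j ∈ F_m (so j is odd, j ≤ m), then the immediate predecessor of 2/j in F_m is (⌈2m/j⌉-1) / ((j(⌈2m/j⌉-1)+1)/2) when ⌈2m/j⌉ is even, and (⌈2m/j⌉-2) / ((j(⌈2m/j⌉-2)+1)/2) when ⌈2m/j⌉ is odd. -/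
/-!
Write `c = ⌈2m/j⌉` and let `a` be `c - 1` or `c - 2`, whichever is odd: it is the largest odd
integer with `a j < 2m`. Since `a j` is odd, `b = (a j + 1)/2` is an integer, so the formula is
`a / b` with `2 b - a j = 1`, i.e. `a / b` and `2 / j` are neighbours in the Stern–Brocot sense.
Any rational `u / v` strictly between them satisfies
`v = b (2 v - j u) + j (b u - a v) ≥ b + j`, and the maximality of `a` gives `b + j > m`.
-/

theorem Rat.add_le_den_of_lt_of_lt {a b c d : ℤ} (hb : 0 < b) (hd : 0 < d)
    (hdet : b * c - a * d = 1) {r : ℚ} (hlo : (a / b : ℚ) < r) (hhi : r < c / d) :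
    b + d ≤ r.den := by
  have hv : (0 : ℚ) < r.den := mod_cast r.pos
  rw [← Rat.num_div_den r, div_lt_div_iff₀ (mod_cast hb) hv] at hlo
  rw [← Rat.num_div_den r, div_lt_div_iff₀ hv (mod_cast hd)] at hhi
  have hlo' : a * r.den < r.num * b := mod_cast hlo
  have hhi' : r.num * d < c * r.den := mod_cast hhi
  have hsplit : (r.den : ℤ) = b * (c * r.den - r.num * d) + d * (r.num * b - a * r.den) := by
    linear_combination (-(r.den : ℤ)) * hdet
  nlinarith

theorem div_mem_farey {m : ℕ} {a b : ℤ} (ha : 0 ≤ a) (hab : a ≤ b) (hb : 0 < b)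
    (hbm : b ≤ m) : (a / b : ℚ) ∈ Farey m := by
  have hbq : (0 : ℚ) ≤ b := mod_cast hb.le
  refine ⟨div_nonneg (mod_cast ha) hbq, div_le_one_of_le₀ (mod_cast hab) hbq, ?_⟩
  have hden : ((a / b : ℚ).den : ℤ) ≤ b := by
    rw [← Rat.divInt_eq_div]
    exact Int.le_of_dvd hb (Rat.den_dvd a b)
  exact_mod_cast hden.trans hbm

theorem isGreatest_farey_lt {m : ℕ} {a b c d : ℤ} (ha : 0 ≤ a) (hab : a ≤ b) (hb : 0 < b)
    (hd : 0 < d) (hdet : b * c - a * d = 1) (hbm : b ≤ m) (hmbd : m < b + d) :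
    IsGreatest {r | r ∈ Farey m ∧ r < c / d} (a / b : ℚ) := by
  have hlt : (a / b : ℚ) < c / d := by
    rw [div_lt_div_iff₀ (mod_cast hb) (mod_cast hd)]
    exact_mod_cast (by linarith : a * d < c * b)
  refine ⟨⟨div_mem_farey ha hab hb hbm, hlt⟩, fun r ⟨⟨_, _, hrm⟩, hr⟩ => ?_⟩
  by_contra! hgt
  have := Rat.add_le_den_of_lt_of_lt hb hd hdet hgt hr
  omega

theorem isGreatest_farey_lt_two_div {m j : ℕ} {a : ℤ} (hj : 2 < j) (hjm : j ≤ m)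
    (hodd : Odd j) (ha : Odd a) (hlo : a * j < 2 * m) (hhi : 2 * m ≤ (a + 2) * j) :
    IsGreatest {r | r ∈ Farey m ∧ r < 2 / (j : ℚ)} (a / ((j * a + 1) / 2) : ℚ) := by
  obtain ⟨b, hb⟩ : ∃ b : ℤ, j * a + 1 = 2 * b := (hodd.natCast.mul ha).add_one.exists_two_nsmul _
  have hbq : ((j : ℚ) * a + 1) / 2 = b := by
    rw [div_eq_iff two_ne_zero, mul_comm (b : ℚ)]
    exact_mod_cast hb
  have ha0 : 0 ≤ a := by nlinarith
  have hpred := isGreatest_farey_lt (m := m) (c := 2) (d := j) ha0 (by nlinarith) (by nlinarith)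
    (by omega) (by linarith) (by linarith) (by nlinarith)
  rw [hbq]
  simpa only [Int.cast_ofNat, Int.cast_natCast] using hpred

theorem farey_pred_two_div_general (m j : ℕ) (hj : 2 < j) (hjm : j ≤ m)
    (hodd : Odd j) :
    (let c : ℤ := ⌈(2 * (m : ℚ)) / j⌉
     let p : ℚ := if Even c then ((c : ℚ) - 1) / (((j : ℚ) * ((c : ℚ) - 1) + 1) / 2)
                  else ((c : ℚ) - 2) / (((j : ℚ) * ((c : ℚ) - 2) + 1) / 2)
     p ∈ Farey m ∧ p < 2 / (j : ℚ) ∧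
       ∀ r ∈ Farey m, r < 2 / (j : ℚ) → r ≤ p) := by
  intro c p
  have hjq : (0 : ℚ) < j := by positivity
  have hc_lo : (c - 1) * j < 2 * (m : ℤ) := by
    have : (c : ℚ) < 2 * m / j + 1 := Int.ceil_lt_add_one _
    rw [← sub_lt_iff_lt_add, lt_div_iff₀ hjq] at this
    exact_mod_cast this
  have hc_hi : 2 * (m : ℤ) ≤ c * j := by
    have : 2 * m / j ≤ (c : ℚ) := Int.le_ceil _
    rw [div_le_iff₀ hjq] at this
    exact_mod_cast this
  have hp : IsGreatest {r | r ∈ Farey m ∧ r < 2 / (j : ℚ)} p := by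
    by_cases hc : Even c
    · simpa [p, hc] using isGreatest_farey_lt_two_div (a := c - 1) hj hjm hodd
        (hc.sub_odd odd_one) hc_lo (by nlinarith)
    · simpa [p, hc] using isGreatest_farey_lt_two_div (a := c - 2) hj hjm hodd
        ((Int.not_even_iff_odd.mp hc).sub_even even_two) (by nlinarith) (by linarith)
  exact ⟨hp.1.1, hp.1.2, fun r hr hlt => hp.2 ⟨hr, hlt⟩⟩

/-- If `2/j ∈ F_m` (`j` odd, `2 < j ≤ m`), then the immediate predecessor of `2/j`
in `F_m` is `(⌈2m/j⌉-1)/((j(⌈2m/j⌉-1)+1)/2)` when `⌈2m/j⌉` is even, and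
`(⌈2m/j⌉-2)/((j(⌈2m/j⌉-2)+1)/2)` when `⌈2m/j⌉` is odd. -/
theorem farey_pred_two_div (m j : ℕ) (hm : 1 < m) (hj : 2 < j) (hjm : j ≤ m)
    (hodd : Odd j) :
    (let c : ℤ := ⌈(2 * (m : ℚ)) / j⌉
     let p : ℚ := if Even c then ((c : ℚ) - 1) / (((j : ℚ) * ((c : ℚ) - 1) + 1) / 2)
                  else ((c : ℚ) - 2) / (((j : ℚ) * ((c : ℚ) - 2) + 1) / 2)
     p ∈ Farey m ∧ p < 2 / (j : ℚ) ∧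
       ∀ r ∈ Farey m, r < 2 / (j : ℚ) → r ≤ p) :=
  farey_pred_two_div_general m j hj hjm hodd
end

section
/- Suppose h/k ∈ F^{≤1/2}(B(2m), m) with h/k ≠ 0, and let b be the integer with h·b ≡ 1 (mod (k-h)) and m - k + h + 1 ≤ b ≤ m. Then the rational ((hb-1)/(k-h)) / ((kb-1)/(k-h)) is the immediate predecessor of h/k in F(B(2m), m). -/
set_option maxHeartbeats 1000000 in
/-- If `h/k ∈ F^{≤1/2}(B(2m), m)` (in lowest terms, `h ≥ 1`) and `b` satisfies
`h·b ≡ 1 (mod (k-h))` with `m - k + h + 1 ≤ b ≤ m`, then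
`((hb-1)/(k-h)) / ((kb-1)/(k-h))` is the immediate predecessor of `h/k` in
`F(B(2m), m)`. -/
theorem fareyB_pred (m h k : ℕ) (b : ℤ) (hm : 1 < m) (hh : 1 ≤ h) (hk : 2 * h ≤ k)
    (hcop : Nat.Coprime h k) (hmem : (h : ℚ) / k ∈ FareyBLeft m)
    (hb : ((k : ℤ) - h) ∣ h * b - 1) (hb1 : (m : ℤ) - k + h + 1 ≤ b) (hb2 : b ≤ m) :
    (((h : ℚ) * b - 1) / ((k : ℚ) - h)) / (((k : ℚ) * b - 1) / ((k : ℚ) - h)) ∈ FareyB m ∧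
      (((h : ℚ) * b - 1) / ((k : ℚ) - h)) / (((k : ℚ) * b - 1) / ((k : ℚ) - h)) < (h : ℚ) / k ∧
      ∀ r ∈ FareyB m, r < (h : ℚ) / k →
        r ≤ (((h : ℚ) * b - 1) / ((k : ℚ) - h)) / (((k : ℚ) * b - 1) / ((k : ℚ) - h)) := by
  classical
  obtain ⟨a, ha⟩ := hb
  -- basic positivity facts
  have hk2 : 2 ≤ k := le_trans (by omega) hk
  have hK0 : (0:ℤ) < k := by exact_mod_cast (by omega : 0 < k)
  have hKH : (0:ℤ) < (k:ℤ) - h := by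
    have : (h:ℤ) + h ≤ k := by exact_mod_cast (by omega : h + h ≤ k)
    have : (1:ℤ) ≤ h := by exact_mod_cast hh
    omega
  -- facts from membership of h/k
  have hcast : ((h : ℚ) / k) = ((h:ℤ):ℚ) / ((k:ℤ):ℚ) := by push_cast; ring
  have hkq : ((h : ℚ) / k).den = k := by
    have := Rat.den_div_eq_of_coprime (a := (h:ℤ)) (b := (k:ℤ)) hK0
      (by simpa using hcop)
    rw [hcast]; exact_mod_cast this
  have hnq : ((h : ℚ) / k).num = h := by
    rw [hcast]; exact Rat.num_div_eq_of_coprime hK0 (by simpa using hcop)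
  obtain ⟨⟨_, _, hden2m, hdenum, hnumm⟩, _⟩ := hmem
  rw [hkq] at hden2m
  rw [hkq, hnq] at hdenum
  rw [hnq] at hnumm
  -- hden2m : k ≤ 2*m, hdenum : (k:ℤ) - m ≤ h, hnumm : (h:ℤ) ≤ m
  have hb1' : (1:ℤ) ≤ b := by omega
  have hHb : (1:ℤ) ≤ h * b := by
    have : (1:ℤ) ≤ h := by exact_mod_cast hh
    nlinarith
  have ha0 : 0 ≤ a := by
    by_contra hneg
    push_neg at hneg
    have : ((k:ℤ) - h) * a ≤ -((k:ℤ) - h) := by nlinarith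
    omega
  have hab : a < b := by
    have hHle : (h:ℤ) ≤ (k:ℤ) - h := by
      have : (h:ℤ) + h ≤ k := by exact_mod_cast (by omega : h + h ≤ k)
      omega
    have : ((k:ℤ) - h) * a < ((k:ℤ) - h) * b := by nlinarith
    exact lt_of_mul_lt_mul_left this (le_of_lt hKH)
  set c : ℤ := a + b with hc_def
  have hc0 : (0:ℤ) < c := by omega
  have hkey : (h:ℤ) * c - (k:ℤ) * a = 1 := by
    rw [hc_def]; linear_combination ha
  have hcop2 : Nat.Coprime a.natAbs c.natAbs := by
    have : IsCoprime a c := ⟨-(k:ℤ), (h:ℤ), by linarith⟩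
    rwa [Int.isCoprime_iff_gcd_eq_one] at this
  -- the expression equals a / c
  have hKHQ : ((k:ℚ) - h) ≠ 0 := by
    have : ((k:ℚ) - h) = (((k:ℤ) - h : ℤ) : ℚ) := by push_cast; ring
    rw [this]
    exact_mod_cast hKH.ne'
  have e1 : ((h:ℚ) * b - 1) = ((k:ℚ) - h) * a := by
    have := congrArg (fun z : ℤ => (z : ℚ)) ha
    push_cast at this
    linear_combination this
  have e2 : ((k:ℚ) * b - 1) = ((k:ℚ) - h) * c := by
    have := congrArg (fun z : ℤ => (z : ℚ)) ha
    push_cast at this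
    push_cast [hc_def]
    linear_combination this
  have hE : (((h : ℚ) * b - 1) / ((k : ℚ) - h)) / (((k : ℚ) * b - 1) / ((k : ℚ) - h))
      = (a : ℚ) / (c : ℚ) := by
    rw [e1, e2, mul_div_cancel_left₀ _ hKHQ, mul_div_cancel_left₀ _ hKHQ]
  rw [hE]
  have hden : (((a:ℚ)/(c:ℚ)).den : ℤ) = c := Rat.den_div_eq_of_coprime hc0 hcop2
  have hnum : ((a:ℚ)/(c:ℚ)).num = a := Rat.num_div_eq_of_coprime hc0 hcop2
  have hcQ : (0:ℚ) < (c:ℚ) := by exact_mod_cast hc0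
  refine ⟨⟨?_, ?_, ?_, ?_, ?_⟩, ?_, ?_⟩
  · exact div_nonneg (by exact_mod_cast ha0) hcQ.le
  · rw [div_le_one hcQ]
    exact_mod_cast (by omega : a ≤ c)
  · have : (((a:ℚ)/(c:ℚ)).den : ℤ) ≤ 2 * m := by rw [hden]; omega
    exact_mod_cast this
  · rw [hden, hnum]; omega
  · rw [hnum]; omega
  · rw [div_lt_div_iff₀ hcQ (by exact_mod_cast hK0)]
    have : (a:ℤ) * k < h * c := by nlinarith [hkey]
    exact_mod_cast this
  · intro r hr hrk
    by_contra hcon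
    push_neg at hcon
    -- r = p / q with the usual bounds
    set p : ℤ := r.num with hp_def
    set q : ℤ := (r.den : ℤ) with hq_def
    have hq0 : (0:ℤ) < q := by rw [hq_def]; exact_mod_cast r.pos
    have hrpq : r = (p:ℚ) / (q:ℚ) := by
      rw [hp_def, hq_def]; exact_mod_cast (Rat.num_div_den r).symm
    have hqQ : (0:ℚ) < (q:ℚ) := by exact_mod_cast hq0
    have h1 : (1:ℤ) ≤ (h:ℤ) * q - (k:ℤ) * p := by
      rw [hrpq, div_lt_div_iff₀ hqQ (by exact_mod_cast hK0)] at hrk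
      have h' : p * k < h * q := by exact_mod_cast hrk
      have h'' : (0:ℤ) < (h:ℤ) * q - (k:ℤ) * p := by linarith [mul_comm p (k:ℤ)]
      omega
    have h2 : (1:ℤ) ≤ p * c - q * a := by
      rw [hrpq, div_lt_div_iff₀ hcQ hqQ] at hcon
      have h' : a * q < p * c := by exact_mod_cast hcon
      have h'' : (0:ℤ) < p * c - q * a := by linarith [mul_comm a q]
      omega
    obtain ⟨_, _, _, hr4, hr5⟩ := hr
    have hqp : q - p ≤ m := by
      rw [← hq_def, ← hp_def] at hr4
      omega
    have hiden : q - p = (c - a) * ((h:ℤ) * q - (k:ℤ) * p) + ((k:ℤ) - h) * (p * c - q * a) := by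
      linear_combination (p - q) * hkey
    have hba : 1 ≤ c - a := by omega
    have t1 : (c - a) * 1 ≤ (c - a) * ((h:ℤ) * q - (k:ℤ) * p) :=
      mul_le_mul_of_nonneg_left h1 (by omega)
    have t2 : ((k:ℤ) - h) * 1 ≤ ((k:ℤ) - h) * (p * c - q * a) :=
      mul_le_mul_of_nonneg_left h2 (by omega)
    have hfin : (c - a) + ((k:ℤ) - h) ≤ q - p := by
      rw [hiden]; linarith
    omega
end

section
/- If 1/(j+1) ∈ F(B(2m), m) and 1/(j+1) < 1/2, then the fraction (⌈m/j⌉-1) / ((j+1)(⌈m/j⌉-1)+1) is the immediate predecessor of 1/(j+1) in F(B(2m), m), and (⌈(m+2)/j⌉-1) / ((j+1)(⌈(m+2)/j⌉-1)-1) is its immediate successor in F(B(2m), m). -/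
set_option maxHeartbeats 1000000


lemma between_key {a b c d h k : ℤ} (hdet : b * c - a * d = 1)
    (hx : 1 ≤ c * k - d * h) (hy : 1 ≤ h * b - a * k)
    (hba : a ≤ b) (hdc : c ≤ d) : (b - a) + (d - c) ≤ k - h := by
  have h1 : h = (c * k - d * h) * a + (h * b - a * k) * c := by linear_combination (-h) * hdet
  have h2 : k = (c * k - d * h) * b + (h * b - a * k) * d := by linear_combination (-k) * hdet
  nlinarith [mul_le_mul_of_nonneg_right hx (sub_nonneg.2 hba),
    mul_le_mul_of_nonneg_right hy (sub_nonneg.2 hdc)]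

/-- If `1/(j+1) ∈ F(B(2m), m)` and `1/(j+1) < 1/2` (i.e. `1 < j ≤ m`), then
`(⌈m/j⌉-1)/((j+1)(⌈m/j⌉-1)+1)` is the immediate predecessor and
`(⌈(m+2)/j⌉-1)/((j+1)(⌈(m+2)/j⌉-1)-1)` the immediate successor of `1/(j+1)`
in `F(B(2m), m)`. -/
theorem fareyB_nbrs_one_div (m j : ℕ) (hm : 1 < m) (hj : 1 < j) (hjm : j ≤ m) :
    (let c1 : ℚ := ((⌈(m : ℚ) / j⌉ : ℤ) : ℚ) - 1
     let p : ℚ := c1 / (((j : ℚ) + 1) * c1 + 1)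
     p ∈ FareyB m ∧ p < 1 / ((j : ℚ) + 1) ∧
       ∀ r ∈ FareyB m, r < 1 / ((j : ℚ) + 1) → r ≤ p) ∧
    (let c2 : ℚ := ((⌈((m : ℚ) + 2) / j⌉ : ℤ) : ℚ) - 1
     let s : ℚ := c2 / (((j : ℚ) + 1) * c2 - 1)
     s ∈ FareyB m ∧ 1 / ((j : ℚ) + 1) < s ∧
       ∀ r ∈ FareyB m, 1 / ((j : ℚ) + 1) < r → s ≤ r) := by
  have hjQ : (0 : ℚ) < (j : ℚ) := by exact_mod_cast Nat.pos_of_ne_zero (by omega)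
  have hj1Q : (0 : ℚ) < (j : ℚ) + 1 := by positivity
  have hjZ : (2 : ℤ) ≤ (j : ℤ) := by exact_mod_cast hj
  have hjmZ : (j : ℤ) ≤ (m : ℤ) := by exact_mod_cast hjm
  have hmZ : (2 : ℤ) ≤ (m : ℤ) := by exact_mod_cast hm
  -- C1 facts
  set C1 : ℤ := ⌈(m : ℚ) / j⌉ - 1 with hC1def
  have hC1nn : 0 ≤ C1 := by
    have : (0 : ℤ) < ⌈(m : ℚ) / j⌉ := Int.ceil_pos.2 (by positivity)
    omega
  have hC1ge : (m : ℤ) ≤ j * C1 + j := by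
    have h1 : (m : ℚ) / j ≤ ((⌈(m : ℚ) / j⌉ : ℤ) : ℚ) := Int.le_ceil _
    have h2 : (m : ℚ) ≤ (j : ℚ) * ((⌈(m : ℚ) / j⌉ : ℤ) : ℚ) := by
      rw [div_le_iff₀ hjQ] at h1; linarith
    have : (m : ℚ) ≤ (((j : ℤ) * C1 + j : ℤ) : ℚ) := by push_cast [hC1def]; linarith
    exact_mod_cast this
  have hC1le : j * C1 ≤ (m : ℤ) - 1 := by
    have h1 : ((⌈(m : ℚ) / j⌉ : ℤ) : ℚ) < (m : ℚ) / j + 1 := Int.ceil_lt_add_one _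
    have h2 : (j : ℚ) * ((⌈(m : ℚ) / j⌉ : ℤ) : ℚ) < (m : ℚ) + j := by
      rw [div_add' _ _ _ (ne_of_gt hjQ), lt_div_iff₀ hjQ] at h1; linarith
    have h3 : ((j : ℤ) * (C1 + 1) : ℤ) < ((m : ℤ) + j : ℤ) := by
      have : (((j : ℤ) * (C1 + 1) : ℤ) : ℚ) < (((m : ℤ) + j : ℤ) : ℚ) := by
        push_cast [hC1def]; linarith
      exact_mod_cast this
    nlinarith
  -- C2 facts
  set C2 : ℤ := ⌈((m : ℚ) + 2) / j⌉ - 1 with hC2def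
  have hC2nn : 1 ≤ C2 := by
    have : (1 : ℤ) < ⌈((m : ℚ) + 2) / j⌉ := by
      rw [Int.lt_ceil]
      rw [lt_div_iff₀ hjQ]
      push_cast
      have : (j : ℚ) ≤ m := by exact_mod_cast hjm
      linarith
    omega
  have hC2ge : (m : ℤ) + 2 ≤ j * C2 + j := by
    have h1 : ((m : ℚ) + 2) / j ≤ ((⌈((m : ℚ) + 2) / j⌉ : ℤ) : ℚ) := Int.le_ceil _
    have h2 : (m : ℚ) + 2 ≤ (j : ℚ) * ((⌈((m : ℚ) + 2) / j⌉ : ℤ) : ℚ) := by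
      rw [div_le_iff₀ hjQ] at h1; linarith
    have : (((m : ℤ) + 2 : ℤ) : ℚ) ≤ (((j : ℤ) * C2 + j : ℤ) : ℚ) := by
      push_cast [hC2def]; linarith
    exact_mod_cast this
  have hC2le : j * C2 ≤ (m : ℤ) + 1 := by
    have h1 : ((⌈((m : ℚ) + 2) / j⌉ : ℤ) : ℚ) < ((m : ℚ) + 2) / j + 1 := Int.ceil_lt_add_one _
    have h2 : (j : ℚ) * ((⌈((m : ℚ) + 2) / j⌉ : ℤ) : ℚ) < (m : ℚ) + 2 + j := by
      rw [div_add' _ _ _ (ne_of_gt hjQ), lt_div_iff₀ hjQ] at h1; linarith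
    have h3 : ((j : ℤ) * (C2 + 1) : ℤ) < ((m : ℤ) + 2 + j : ℤ) := by
      have : (((j : ℤ) * (C2 + 1) : ℤ) : ℚ) < (((m : ℤ) + 2 + j : ℤ) : ℚ) := by
        push_cast [hC2def]; linarith
      exact_mod_cast this
    nlinarith
  set E : ℤ := (j + 1) * C1 + 1 with hEdef
  set D : ℤ := (j + 1) * C2 - 1 with hDdef
  have hE0 : 0 < E := by nlinarith
  have hD0 : 0 < D := by nlinarith
  have h2C1 : 2 * C1 ≤ j * C1 := by nlinarith
  have h2C2 : 2 * C2 ≤ j * C2 := by nlinarith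
  have hcop1 : Nat.Coprime C1.natAbs E.natAbs := by
    have : IsCoprime C1 E := ⟨-((j : ℤ) + 1), 1, by rw [hEdef]; ring⟩
    exact Int.isCoprime_iff_gcd_eq_one.mp this
  have hcop2 : Nat.Coprime C2.natAbs D.natAbs := by
    have : IsCoprime C2 D := ⟨(j : ℤ) + 1, -1, by rw [hDdef]; ring⟩
    exact Int.isCoprime_iff_gcd_eq_one.mp this
  have hpnum : ((C1 : ℚ) / (E : ℚ)).num = C1 := Rat.num_div_eq_of_coprime hE0 hcop1
  have hpden : (((C1 : ℚ) / (E : ℚ)).den : ℤ) = E := Rat.den_div_eq_of_coprime hE0 hcop1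
  have hsnum : ((C2 : ℚ) / (D : ℚ)).num = C2 := Rat.num_div_eq_of_coprime hD0 hcop2
  have hsden : (((C2 : ℚ) / (D : ℚ)).den : ℤ) = D := Rat.den_div_eq_of_coprime hD0 hcop2
  have hEQ : (0 : ℚ) < (E : ℚ) := by exact_mod_cast hE0
  have hDQ : (0 : ℚ) < (D : ℚ) := by exact_mod_cast hD0
  -- rewrite the `let` fractions
  have hc1 : ((⌈(m : ℚ) / j⌉ : ℤ) : ℚ) - 1 = (C1 : ℚ) := by rw [hC1def]; push_cast; ring
  have hc2 : ((⌈((m : ℚ) + 2) / j⌉ : ℤ) : ℚ) - 1 = (C2 : ℚ) := by rw [hC2def]; push_cast; ring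
  have hEq : ((j : ℚ) + 1) * (C1 : ℚ) + 1 = (E : ℚ) := by rw [hEdef]; push_cast; ring
  have hDq : ((j : ℚ) + 1) * (C2 : ℚ) - 1 = (D : ℚ) := by rw [hDdef]; push_cast; ring
  have hpeq : (((⌈(m : ℚ) / j⌉ : ℤ) : ℚ) - 1) / (((j : ℚ) + 1) * (((⌈(m : ℚ) / j⌉ : ℤ) : ℚ) - 1) + 1)
      = (C1 : ℚ) / (E : ℚ) := by rw [hc1, hEq]
  have hseq : (((⌈((m : ℚ) + 2) / j⌉ : ℤ) : ℚ) - 1) / (((j : ℚ) + 1) * (((⌈((m : ℚ) + 2) / j⌉ : ℤ) : ℚ) - 1) - 1)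
      = (C2 : ℚ) / (D : ℚ) := by rw [hc2, hDq]
  clear_value C1 C2 E D
  constructor
  · show ((((⌈(m : ℚ) / j⌉ : ℤ) : ℚ) - 1) / (((j : ℚ) + 1) * (((⌈(m : ℚ) / j⌉ : ℤ) : ℚ) - 1) + 1)) ∈ FareyB m ∧
        (((⌈(m : ℚ) / j⌉ : ℤ) : ℚ) - 1) / (((j : ℚ) + 1) * (((⌈(m : ℚ) / j⌉ : ℤ) : ℚ) - 1) + 1) < 1 / ((j : ℚ) + 1) ∧
        ∀ r ∈ FareyB m, r < 1 / ((j : ℚ) + 1) → r ≤ (((⌈(m : ℚ) / j⌉ : ℤ) : ℚ) - 1) / (((j : ℚ) + 1) * (((⌈(m : ℚ) / j⌉ : ℤ) : ℚ) - 1) + 1)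
    rw [hpeq]
    have hF1 : E - C1 = (j : ℤ) * C1 + 1 := by rw [hEdef]; ring
    have hjC1nn : (0 : ℤ) ≤ (j : ℤ) * C1 := mul_nonneg (by positivity) hC1nn
    have hbaP : C1 ≤ E := by linarith
    have hC1Q : (0 : ℚ) ≤ (C1 : ℚ) := by exact_mod_cast hC1nn
    refine ⟨⟨div_nonneg hC1Q hEQ.le, ?_, ?_, ?_, ?_⟩, ?_, ?_⟩
    · rw [div_le_one hEQ]; exact_mod_cast hbaP
    · have hE2m : E ≤ 2 * (m : ℤ) := by linarith
      have : (((((C1 : ℚ) / (E : ℚ)).den : ℕ) : ℤ)) ≤ ((2 * m : ℕ) : ℤ) := by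
        rw [hpden]; push_cast; linarith
      exact_mod_cast this
    · rw [hpden, hpnum]; linarith
    · rw [hpnum]; linarith
    · rw [div_lt_div_iff₀ hEQ hj1Q]
      have : ((C1 * ((j : ℤ) + 1) : ℤ) : ℚ) < ((E : ℤ) : ℚ) := by
        exact_mod_cast (by linarith : C1 * ((j : ℤ) + 1) < E)
      push_cast at this ⊢
      linarith
    · intro r hr hlt
      by_contra hcon
      push_neg at hcon
      obtain ⟨hr0, hr1, hrden, hrlow, hrhigh⟩ := hr
      have hre : ((r.num : ℚ)) / ((r.den : ℚ)) = r := Rat.num_div_den r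
      have hkQ : (0 : ℚ) < (r.den : ℚ) := by exact_mod_cast r.pos
      rw [← hre, div_lt_div_iff₀ hkQ hj1Q] at hlt
      rw [← hre, div_lt_div_iff₀ hEQ hkQ] at hcon
      have hI1 : ((j : ℤ) + 1) * r.num < (r.den : ℤ) := by
        have : (((j : ℤ) + 1 : ℤ) : ℚ) * ((r.num : ℤ) : ℚ) < (((r.den : ℤ) : ℤ) : ℚ) := by
          push_cast; linarith
        exact_mod_cast this
      have hI2 : C1 * (r.den : ℤ) < r.num * E := by
        have : ((C1 : ℤ) : ℚ) * (((r.den : ℤ) : ℤ) : ℚ) < ((r.num : ℤ) : ℚ) * ((E : ℤ) : ℚ) := by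
          push_cast; linarith
        exact_mod_cast this
      have key := between_key (a := C1) (b := E) (c := 1) (d := (j : ℤ) + 1)
        (h := r.num) (k := (r.den : ℤ)) (by rw [hEdef]; ring)
        (by linarith) (by linarith) hbaP (by linarith)
      linarith
  · show ((((⌈((m : ℚ) + 2) / j⌉ : ℤ) : ℚ) - 1) / (((j : ℚ) + 1) * (((⌈((m : ℚ) + 2) / j⌉ : ℤ) : ℚ) - 1) - 1)) ∈ FareyB m ∧
        1 / ((j : ℚ) + 1) < (((⌈((m : ℚ) + 2) / j⌉ : ℤ) : ℚ) - 1) / (((j : ℚ) + 1) * (((⌈((m : ℚ) + 2) / j⌉ : ℤ) : ℚ) - 1) - 1) ∧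
        ∀ r ∈ FareyB m, 1 / ((j : ℚ) + 1) < r → (((⌈((m : ℚ) + 2) / j⌉ : ℤ) : ℚ) - 1) / (((j : ℚ) + 1) * (((⌈((m : ℚ) + 2) / j⌉ : ℤ) : ℚ) - 1) - 1) ≤ r
    rw [hseq]
    have hF2 : D - C2 = (j : ℤ) * C2 - 1 := by rw [hDdef]; ring
    have hjC2 : (2 : ℤ) ≤ (j : ℤ) * C2 := by nlinarith
    have hbaS : C2 ≤ D := by linarith
    have hC2Q : (0 : ℚ) ≤ (C2 : ℚ) := by exact_mod_cast (by linarith : (0 : ℤ) ≤ C2)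
    refine ⟨⟨div_nonneg hC2Q hDQ.le, ?_, ?_, ?_, ?_⟩, ?_, ?_⟩
    · rw [div_le_one hDQ]; exact_mod_cast hbaS
    · have hD2m : D ≤ 2 * (m : ℤ) := by linarith
      have : (((((C2 : ℚ) / (D : ℚ)).den : ℕ) : ℤ)) ≤ ((2 * m : ℕ) : ℤ) := by
        rw [hsden]; push_cast; linarith
      exact_mod_cast this
    · rw [hsden, hsnum]; linarith
    · rw [hsnum]; linarith
    · rw [div_lt_div_iff₀ hj1Q hDQ]
      have : ((D : ℤ) : ℚ) < ((C2 * ((j : ℤ) + 1) : ℤ) : ℚ) := by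
        exact_mod_cast (by linarith : D < C2 * ((j : ℤ) + 1))
      push_cast at this ⊢
      linarith
    · intro r hr hlt
      by_contra hcon
      push_neg at hcon
      obtain ⟨hr0, hr1, hrden, hrlow, hrhigh⟩ := hr
      have hre : ((r.num : ℚ)) / ((r.den : ℚ)) = r := Rat.num_div_den r
      have hkQ : (0 : ℚ) < (r.den : ℚ) := by exact_mod_cast r.pos
      rw [← hre, div_lt_div_iff₀ hj1Q hkQ] at hlt
      rw [← hre, div_lt_div_iff₀ hkQ hDQ] at hcon
      have hI1 : (r.den : ℤ) < ((j : ℤ) + 1) * r.num := by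
        have : (((r.den : ℤ) : ℤ) : ℚ) < (((j : ℤ) + 1 : ℤ) : ℚ) * ((r.num : ℤ) : ℚ) := by
          push_cast; linarith
        exact_mod_cast this
      have hI2 : r.num * D < C2 * (r.den : ℤ) := by
        have : ((r.num : ℤ) : ℚ) * ((D : ℤ) : ℚ) < ((C2 : ℤ) : ℚ) * (((r.den : ℤ) : ℤ) : ℚ) := by
          push_cast; linarith
        exact_mod_cast this
      have key := between_key (a := 1) (b := (j : ℤ) + 1) (c := C2) (d := D)
        (h := r.num) (k := (r.den : ℤ)) (by rw [hDdef]; ring)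
        (by linarith) (by linarith) (by linarith) hbaS
      linarith
end

section
/- For m > 1, the fractions 1/2 < m/(2m-1) < (m-1)/(2m-3) < (m-2)/(2m-5) < ... < ⌈m/2⌉/(2⌈m/2⌉-1) are consecutive in F(B(2m), m); that is, for ⌈m/2⌉ ≤ j < m, there is no element of F(B(2m), m) strictly between (j+1)/(2(j+1)-1) and j/(2j-1), and there is no element of F(B(2m), m) strictly between 1/2 and m/(2m-1). -/
/-- Auxiliary: if `c/d < r < a/b` with unimodular data and `m < a + c`,
then `r` cannot lie in `FareyB m`. -/
lemma fareyB_no_between (m : ℕ) (a b c d : ℤ) (ha : 0 < a) (hb : 0 < b)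
    (hc : 0 < c) (hd : 0 < d) (hdet : a * d - c * b = 1) (ham : (m : ℤ) < a + c)
    (r : ℚ) (hr : r ∈ FareyB m)
    (h1 : (c : ℚ) / d < r) (h2 : r < (a : ℚ) / b) : False := by
  obtain ⟨_, _, _, _, hnum⟩ := hr
  have hq : (0 : ℚ) < (r.den : ℚ) := by exact_mod_cast r.pos
  rw [show r = (r.num : ℚ) / (r.den : ℚ) from (Rat.num_div_den r).symm,
    div_lt_div_iff₀ (by exact_mod_cast hd) hq] at h1
  rw [show r = (r.num : ℚ) / (r.den : ℚ) from (Rat.num_div_den r).symm,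
    div_lt_div_iff₀ hq (by exact_mod_cast hb)] at h2
  have e1 : c * (r.den : ℤ) < r.num * d := by exact_mod_cast h1
  have e2 : r.num * b < a * (r.den : ℤ) := by exact_mod_cast h2
  have A1 : 1 ≤ r.num * d - c * (r.den : ℤ) := by omega
  have B1 : 1 ≤ a * (r.den : ℤ) - r.num * b := by omega
  have key : a * (r.num * d - c * (r.den : ℤ)) + c * (a * (r.den : ℤ) - r.num * b)
      = r.num := by linear_combination r.num * hdet
  have hA := mul_le_mul_of_nonneg_left A1 ha.le
  have hB := mul_le_mul_of_nonneg_left B1 hc.le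
  have : a + c ≤ r.num := by nlinarith
  omega

/-- The fractions `1/2 < m/(2m-1) < (m-1)/(2m-3) < ⋯ < ⌈m/2⌉/(2⌈m/2⌉-1)` are
consecutive in `F(B(2m), m)`: each `j/(2j-1)` with `⌈m/2⌉ ≤ j ≤ m` belongs to
`F(B(2m), m)`, no element of `F(B(2m), m)` lies strictly between `1/2` and
`m/(2m-1)`, and for `⌈m/2⌉ ≤ j < m` no element lies strictly between
`(j+1)/(2(j+1)-1)` and `j/(2j-1)`. -/
theorem fareyB_consecutive_right (m : ℕ) (hm : 1 < m) :
    (∀ j : ℕ, (m + 1) / 2 ≤ j → j ≤ m → (j : ℚ) / (2 * j - 1) ∈ FareyB m) ∧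
    (∀ r ∈ FareyB m, ¬((1 : ℚ) / 2 < r ∧ r < (m : ℚ) / (2 * m - 1))) ∧
    (∀ j : ℕ, (m + 1) / 2 ≤ j → j < m →
      ∀ r ∈ FareyB m,
        ¬(((j : ℚ) + 1) / (2 * ((j : ℚ) + 1) - 1) < r ∧ r < (j : ℚ) / (2 * j - 1))) := by
  refine ⟨?_, ?_, ?_⟩
  · intro j hj1 hj2
    have hj0 : 1 ≤ j := by omega
    have hbpos : (0 : ℤ) < 2 * (j : ℤ) - 1 := by omega
    have hco : Nat.Coprime (j : ℤ).natAbs ((2 * (j : ℤ) - 1)).natAbs := by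
      have habs1 : (j : ℤ).natAbs = j := Int.natAbs_natCast j
      have habs2 : ((2 * (j : ℤ) - 1)).natAbs = 2 * j - 1 := by omega
      rw [habs1, habs2]
      have h1 : Nat.gcd j (2 * j - 1) ∣ j := Nat.gcd_dvd_left _ _
      have h2 : Nat.gcd j (2 * j - 1) ∣ 2 * j - 1 := Nat.gcd_dvd_right _ _
      have h3 : Nat.gcd j (2 * j - 1) ∣ 2 * j - (2 * j - 1) :=
        Nat.dvd_sub (h1.mul_left 2) h2
      have h4 : 2 * j - (2 * j - 1) = 1 := by omega
      rw [h4] at h3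
      exact Nat.dvd_one.mp h3
    have hrepr : (j : ℚ) / (2 * (j : ℚ) - 1)
        = ((j : ℤ) : ℚ) / (((2 * (j : ℤ) - 1) : ℤ) : ℚ) := by push_cast; ring
    have hnum : ((j : ℚ) / (2 * (j : ℚ) - 1)).num = (j : ℤ) := by
      rw [hrepr]; exact Rat.num_div_eq_of_coprime hbpos hco
    have hden : (((j : ℚ) / (2 * (j : ℚ) - 1)).den : ℤ) = 2 * (j : ℤ) - 1 := by
      rw [hrepr]; exact Rat.den_div_eq_of_coprime hbpos hco
    have hbposq : (0 : ℚ) < 2 * (j : ℚ) - 1 := by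
      have : (1 : ℚ) ≤ (j : ℚ) := by exact_mod_cast hj0
      linarith
    refine ⟨by positivity, ?_, ?_, ?_, ?_⟩
    · rw [div_le_one hbposq]
      have : (1 : ℚ) ≤ (j : ℚ) := by exact_mod_cast hj0
      linarith
    · have : (((j : ℚ) / (2 * (j : ℚ) - 1)).den : ℤ) ≤ 2 * (m : ℤ) := by
        rw [hden]; omega
      exact_mod_cast this
    · rw [hnum, hden]; omega
    · rw [hnum]; exact_mod_cast hj2
  · intro r hr ⟨h1, h2⟩
    refine fareyB_no_between m (m : ℤ) (2 * (m : ℤ) - 1) 1 2 (by omega) (by omega)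
      one_pos two_pos (by ring) (by omega) r hr ?_ ?_
    · convert h1 using 2 <;> norm_num
    · convert h2 using 2 <;> push_cast <;> ring
  · intro j hj1 hj2 r hr ⟨h1, h2⟩
    have h2j : m ≤ 2 * j := by omega
    refine fareyB_no_between m (j : ℤ) (2 * (j : ℤ) - 1) ((j : ℤ) + 1) (2 * (j : ℤ) + 1)
      (by omega) (by omega) (by omega) (by omega) (by ring) (by omega) r hr ?_ ?_
    · convert h1 using 2 <;> push_cast <;> ring
    · convert h2 using 2 <;> push_cast <;> ring
end
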